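/- arXiv:1112.4239 — 5 statements merged into one kernel-verified Lean document; each statement's English description precedes it below -/
import Mathlib

section
/- Let G be a Hausdorff, totally disconnected, locally compact topological group, α a topological group automorphism of G, and N a compact α-stable subgroup of G with nub(α) ⊆ N. Then for every open subset U of G with N ⊆ U there is a compact open subgroup V of G that is tidy for α and satisfies N ⊆ V ⊆ U. -/
/-!
Take a compact open subgroup `W` with `N ≤ W ⊆ U`. Being `α`-stable, `N` lies in every
`Vₙ = ⋂_{k ≤ n} αᵏ(W)`, and `Vₙ` is tidy above for large `n`: the number of `α⁻¹(W)`-cosets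
meeting `Vₙ` decreases, hence stabilises, and a compactness argument turns this into
`Vₙ ⊆ (Vₙ)₊(Vₙ)₋`.

A compact open `V` tidy above with `nub α ≤ V` is also tidy below. Writing `w ∈ V ∩ V₊₊` as
`w = p m` with `p ∈ V₊`, `m ∈ V₋`, closedness of `V₊₊` reduces to: an element of `V₋` with bounded
orbit has its whole orbit in `V`. By Baire category, in a tidy subgroup `T` every bounded element
of `T` has its orbit in `T`; approximating the element by a cluster point of its forward orbit
factors it as an element with orbit in `V` times one with orbit in every tidy subgroup, i.e. in
`nub α ⊆ V`.
-/

open Pointwise Filter Topology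

variable {G : Type*}

/-- `V₊ = ⋂_{k ≥ 0} α^k(V)`. -/
def plusPart [Group G] (α : MulAut G) (V : Set G) : Set G :=
  ⋂ k : ℕ, ⇑(α ^ k) '' V

/-- `V₋ = ⋂_{k ≥ 0} α^{-k}(V)`. -/
def minusPart [Group G] (α : MulAut G) (V : Set G) : Set G :=
  ⋂ k : ℕ, ⇑(α⁻¹ ^ k) '' V

/-- `V` is tidy above for `α` if `V = V₊V₋`. -/
def TidyAbove [Group G] (α : MulAut G) (V : Set G) : Prop :=
  V = plusPart α V * minusPart α V

/-- `V` is tidy below for `α` if `V₊₊` and `V₋₋` are closed. -/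
def TidyBelow [Group G] [TopologicalSpace G] (α : MulAut G) (V : Set G) : Prop :=
  IsClosed (⋃ k : ℕ, ⇑(α ^ k) '' plusPart α V) ∧
  IsClosed (⋃ k : ℕ, ⇑(α⁻¹ ^ k) '' minusPart α V)

/-- `V` is tidy for `α` if it is tidy above and tidy below. -/
def Tidy [Group G] [TopologicalSpace G] (α : MulAut G) (V : Set G) : Prop :=
  TidyAbove α V ∧ TidyBelow α V

/-- The nub of `α`: the intersection of all compact open subgroups tidy for `α`. -/
def nub [Group G] [TopologicalSpace G] (α : MulAut G) : Subgroup G :=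
  ⨅ V ∈ {V : Subgroup G | IsCompact (V : Set G) ∧ IsOpen (V : Set G) ∧ Tidy α (V : Set G)}, V

/-- The contraction group `con(α) = { x | α^n(x) → 1 as n → ∞ }`. -/
def conSet [Group G] [TopologicalSpace G] (α : MulAut G) : Set G :=
  {x : G | Tendsto (fun n : ℕ => (α ^ n) x) atTop (𝓝 1)}

/-- The homoclinic (two-sided contraction) group `bcg(α) = con(α) ∩ con(α⁻¹)`. -/
def bcgSet [Group G] [TopologicalSpace G] (α : MulAut G) : Set G :=
  conSet α ∩ conSet α⁻¹

/-- The bounded contraction group `bcon(α)`. -/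
def bconSet [Group G] [TopologicalSpace G] (α : MulAut G) : Set G :=
  {x ∈ conSet α | IsCompact (closure (Set.range fun n : ℕ => (α⁻¹ ^ n) x))}

/-- Image of a subgroup under an automorphism. -/
def mapAut [Group G] (α : MulAut G) (V : Subgroup G) : Subgroup G where
  carrier := ⇑α '' (V : Set G)
  one_mem' := ⟨1, V.one_mem, map_one α⟩
  mul_mem' := by
    rintro a b ⟨a', ha, rfl⟩ ⟨b', hb, rfl⟩
    exact ⟨a' * b', V.mul_mem ha hb, map_mul α a' b'⟩
  inv_mem' := by
    rintro a ⟨a', ha, rfl⟩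
    exact ⟨a'⁻¹, V.inv_mem ha, map_inv α a'⟩

/-- `V₊` as a subgroup. -/
def plusSub [Group G] (α : MulAut G) (V : Subgroup G) : Subgroup G :=
  ⨅ k : ℕ, mapAut (α ^ k) V

/-- `V₋` as a subgroup. -/
def minusSub [Group G] (α : MulAut G) (V : Subgroup G) : Subgroup G :=
  ⨅ k : ℕ, mapAut (α⁻¹ ^ k) V

/-- The shift automorphism of `F^ℤ`. -/
def shiftAut (F : Type*) [Group F] : MulAut (ℤ → F) where
  toFun f := fun n => f (n + 1)
  invFun f := fun n => f (n - 1)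
  left_inv f := by funext n; show f (n - 1 + 1) = f n; congr 1; omega
  right_inv f := by funext n; show f (n + 1 - 1) = f n; congr 1; omega
  map_mul' f g := rfl

section OrbitSubgroup

variable [Group G] {α : MulAut G}

lemma zpow_apply_zpow_apply (α : MulAut G) (a b : ℤ) (x : G) :
    (α ^ a) ((α ^ b) x) = (α ^ (a + b)) x := by
  rw [zpow_add, MulAut.mul_apply]

lemma mem_image_zpow_iff {V : Set G} {k : ℤ} {x : G} :
    x ∈ ⇑(α ^ k) '' V ↔ (α ^ (-k)) x ∈ V := by
  rw [zpow_neg]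
  exact Set.mem_image_equiv (f := (α ^ k).toEquiv)

lemma mem_image_pow_iff {V : Set G} {k : ℕ} {x : G} :
    x ∈ ⇑(α ^ k) '' V ↔ (α ^ (-k : ℤ)) x ∈ V := by
  rw [← mem_image_zpow_iff, zpow_natCast]

lemma zpow_apply_mem_of_image_eq {N : Set G} (h : ⇑α '' N = N) (k : ℤ) {x : G} (hx : x ∈ N) :
    (α ^ k) x ∈ N := by
  have hα : α ∈ MulAction.stabilizer (MulAut G) N := h
  simpa [MulAction.mem_stabilizer_iff.1 (zpow_mem hα k)] using
    Set.smul_mem_smul_set (a := α ^ k) hx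

lemma mem_plusPart_iff {V : Set G} {x : G} :
    x ∈ plusPart α V ↔ ∀ k : ℤ, k ≤ 0 → (α ^ k) x ∈ V := by
  simp only [plusPart, Set.mem_iInter, mem_image_pow_iff]
  refine ⟨fun h k hk => ?_, fun h k => h _ (by omega)⟩
  obtain ⟨n, rfl⟩ := Int.exists_eq_neg_ofNat hk
  exact h n

lemma minusPart_eq_plusPart_inv (α : MulAut G) (V : Set G) :
    minusPart α V = plusPart α⁻¹ V := rfl

lemma minusPart_inv (α : MulAut G) (V : Set G) : minusPart α⁻¹ V = plusPart α V := by
  rw [minusPart, inv_inv, plusPart]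

lemma mem_minusPart_iff {V : Set G} {x : G} :
    x ∈ minusPart α V ↔ ∀ k : ℤ, 0 ≤ k → (α ^ k) x ∈ V := by
  rw [minusPart_eq_plusPart_inv, mem_plusPart_iff]
  refine ⟨fun h k hk => ?_, fun h k hk => ?_⟩ <;> simpa [inv_zpow'] using h (-k) (by omega)

/-- Since `x ∈ αᵏ(W) ↔ α⁻ᵏ x ∈ W`, the window `S = Icc (-n) 0` gives `⋂_{k ≤ n} αᵏ(W)`, while
`S = Iic 0`, `Ici 0`, `univ` give `W₊`, `W₋` and the largest `α`-stable subgroup of `W`. -/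
def orbitSubgroup (α : MulAut G) (W : Subgroup G) (S : Set ℤ) : Subgroup G where
  carrier := {x | ∀ k ∈ S, (α ^ k) x ∈ W}
  one_mem' _ _ := by simp
  mul_mem' hx hy k hk := by simpa using W.mul_mem (hx k hk) (hy k hk)
  inv_mem' hx k hk := by simpa using W.inv_mem (hx k hk)

variable {W : Subgroup G} {S T : Set ℤ} {x : G}

lemma mem_orbitSubgroup : x ∈ orbitSubgroup α W S ↔ ∀ k ∈ S, (α ^ k) x ∈ W := Iff.rfl

lemma coe_orbitSubgroup (α : MulAut G) (W : Subgroup G) (S : Set ℤ) :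
    (orbitSubgroup α W S : Set G) = ⋂ k ∈ S, ⇑(α ^ k) ⁻¹' W := by
  ext x
  simp [mem_orbitSubgroup]

lemma orbitSubgroup_anti (h : S ⊆ T) : orbitSubgroup α W T ≤ orbitSubgroup α W S :=
  fun _ hx k hk => hx k (h hk)

lemma zpow_apply_mem_orbitSubgroup {s : ℤ} :
    (α ^ s) x ∈ orbitSubgroup α W S ↔ ∀ k ∈ S, (α ^ (k + s)) x ∈ W := by
  simp only [mem_orbitSubgroup, zpow_apply_zpow_apply]

lemma zpow_apply_mem_orbitSubgroup_univ {s : ℤ} (hx : x ∈ orbitSubgroup α W Set.univ) :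
    (α ^ s) x ∈ orbitSubgroup α W Set.univ :=
  zpow_apply_mem_orbitSubgroup.2 fun _ _ => hx _ trivial

lemma coe_orbitSubgroup_Iic (α : MulAut G) (W : Subgroup G) (k : ℕ) :
    (orbitSubgroup α W (Set.Iic (-k)) : Set G) = ⇑(α ^ k) '' plusPart α W := by
  ext x
  rw [mem_image_pow_iff, mem_plusPart_iff, SetLike.mem_coe, mem_orbitSubgroup]
  simp only [Set.mem_Iic, zpow_apply_zpow_apply]
  refine ⟨fun h j hj => h _ (by omega), fun h j hj => ?_⟩
  simpa using h (j + k) (by omega)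

lemma coe_orbitSubgroup_Iic_zero (α : MulAut G) (W : Subgroup G) :
    (orbitSubgroup α W (Set.Iic 0) : Set G) = plusPart α W := by
  simpa using coe_orbitSubgroup_Iic α W 0

lemma coe_orbitSubgroup_Ici_zero (α : MulAut G) (W : Subgroup G) :
    (orbitSubgroup α W (Set.Ici 0) : Set G) = minusPart α W := by
  ext x
  rw [mem_minusPart_iff]
  rfl

end OrbitSubgroup

section Topology

variable [Group G] [TopologicalSpace G]

lemma continuous_zpow_of_continuous {α : MulAut G} (hα : Continuous ⇑α)
    (hα' : Continuous ⇑α⁻¹) (z : ℤ) : Continuous ⇑(α ^ z) := by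
  induction z using Int.induction_on with
  | zero => simpa using continuous_id
  | succ n ih => rw [zpow_add_one, MulAut.coe_mul]; exact ih.comp hα
  | pred n ih => rw [zpow_sub_one, MulAut.coe_mul]; exact ih.comp hα'

lemma continuous_inv_zpow {α : MulAut G} (hα : ∀ z : ℤ, Continuous ⇑(α ^ z)) (z : ℤ) :
    Continuous ⇑(α⁻¹ ^ z) := by
  simpa [inv_zpow'] using hα (-z)

variable {α : MulAut G} (hα : ∀ z : ℤ, Continuous ⇑(α ^ z)) {W : Subgroup G}
include hα

lemma isClosed_orbitSubgroup (hW : IsClosed (W : Set G)) (S : Set ℤ) :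
    IsClosed (orbitSubgroup α W S : Set G) := by
  rw [coe_orbitSubgroup]
  exact isClosed_biInter fun k _ => hW.preimage (hα k)

lemma isOpen_orbitSubgroup (hW : IsOpen (W : Set G)) {S : Set ℤ} (hS : S.Finite) :
    IsOpen (orbitSubgroup α W S : Set G) := by
  rw [coe_orbitSubgroup]
  exact hS.isOpen_biInter fun k _ => hW.preimage (hα k)

lemma isCompact_orbitSubgroup [T2Space G] (hW : IsCompact (W : Set G)) {S : Set ℤ}
    (hS : S.Nonempty) : IsCompact (orbitSubgroup α W S : Set G) := by
  obtain ⟨k, hk⟩ := hS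
  refine (hW.image (hα (-k))).of_isClosed_subset (isClosed_orbitSubgroup hα hW.isClosed S)
    fun x hx => ⟨(α ^ k) x, hx k hk, ?_⟩
  rw [zpow_apply_zpow_apply, neg_add_cancel, zpow_zero, MulAut.one_apply]

lemma exists_mapClusterPt_mem_orbitSubgroup_univ [T2Space G] {V : Subgroup G}
    (hVc : IsCompact (V : Set G)) {g : G} (hg : g ∈ minusPart α V) :
    ∃ y ∈ orbitSubgroup α V Set.univ, MapClusterPt y atTop fun j : ℕ => (α ^ (j : ℤ)) g := by
  obtain ⟨y, -, hy⟩ := hVc.exists_mapClusterPt_of_frequently (f := fun j : ℕ => (α ^ (j : ℤ)) g)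
    (l := atTop) (Frequently.of_forall fun j => mem_minusPart_iff.1 hg j (by omega))
  refine ⟨y, fun k _ => hVc.isClosed.mem_of_mapClusterPt (hy.continuousAt_comp (hα k).continuousAt)
    (eventually_atTop.2 ⟨(-k).toNat, fun j hj => ?_⟩), hy⟩
  simpa only [Function.comp_apply, zpow_apply_zpow_apply]
    using mem_minusPart_iff.1 hg (k + j) (by omega)

end Topology

section CompactProducts

variable [Group G] [TopologicalSpace G] [IsTopologicalGroup G] [T2Space G]

lemma mem_iInter_mul_iInter {ι : Type*} [Preorder ι] [IsDirectedOrder ι] [Nonempty ι]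
    {A B : ι → Set G} (hAc : ∀ i, IsCompact (A i)) (hBc : ∀ i, IsClosed (B i))
    (hA : Antitone A) (hB : Antitone B) {x : G} (hx : ∀ i, x ∈ A i * B i) :
    x ∈ (⋂ i, A i) * ⋂ i, B i := by
  -- the factorisations `x = a * b` with `a ∈ A i`, `b ∈ B i` form a directed family of compacta
  set F : ι → Set (G × G) := fun i => A i ×ˢ B i ∩ {p | p.1 * p.2 = x}
  have hFc : ∀ i, IsCompact (F i) := by
    intro i
    refine ((hAc i).prod ((hAc i).inv.mul (isCompact_singleton (x := x)))).of_isClosed_subset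
      (((hAc i).isClosed.prod (hBc i)).inter
        (isClosed_eq (continuous_fst.mul continuous_snd) continuous_const)) ?_
    rintro ⟨a, b⟩ ⟨⟨ha, -⟩, hab : a * b = x⟩
    exact ⟨ha, a⁻¹, Set.inv_mem_inv.2 ha, x, rfl, by simp [← hab]⟩
  obtain ⟨⟨a, b⟩, hp⟩ := IsCompact.nonempty_iInter_of_directed_nonempty_isCompact_isClosed F
    (fun i j => (directed_of (· ≤ ·) i j).imp fun k hk =>
      ⟨Set.inter_subset_inter_left _ (Set.prod_mono (hA hk.1) (hB hk.1)),
        Set.inter_subset_inter_left _ (Set.prod_mono (hA hk.2) (hB hk.2))⟩)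
    (fun i => by obtain ⟨a, ha, b, hb, hab⟩ := hx i; exact ⟨(a, b), ⟨ha, hb⟩, hab⟩)
    hFc (fun i => (hFc i).isClosed)
  rw [Set.mem_iInter] at hp
  exact ⟨a, Set.mem_iInter.2 fun i => (hp i).1.1, b, Set.mem_iInter.2 fun i => (hp i).1.2,
    (hp (Classical.arbitrary ι)).2⟩

end CompactProducts

section Subgroups

lemma exists_isCompact_isOpen_subset {X : Type*} [TopologicalSpace X] [LocallyCompactSpace X]
    [T2Space X] [TotallyDisconnectedSpace X] {x : X} {V : Set X} (hV : V ∈ 𝓝 x) :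
    ∃ O : Set X, IsCompact O ∧ IsOpen O ∧ x ∈ O ∧ O ⊆ V := by
  obtain ⟨L, hL, hLV, hLc⟩ := local_compact_nhds hV
  obtain ⟨O, hO, hxO, hOL⟩ := loc_compact_Haus_tot_disc_of_zero_dim.mem_nhds_iff.1 hL
  exact ⟨O, hLc.of_isClosed_subset hO.isClosed hOL, hO.isOpen, hxO, hOL.trans hLV⟩

lemma stabilizer_subset_of_one_mem [Group G] {K : Set G} (hK : (1 : G) ∈ K) :
    (MulAction.stabilizer G K : Set G) ⊆ K := fun g hg => by
  rw [← MulAction.mem_stabilizer_iff.1 hg]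
  simpa using Set.smul_mem_smul_set (a := g) hK

variable [Group G] [TopologicalSpace G] [IsTopologicalGroup G]

lemma isOpen_stabilizer_of_isCompact {K : Set G} (hKc : IsCompact K) (hKo : IsOpen K) :
    IsOpen (MulAction.stabilizer G K : Set G) := by
  obtain ⟨V, hV, hVK⟩ := compact_open_separated_mul_left hKc hKo subset_rfl
  refine Subgroup.isOpen_of_mem_nhds _ (g := 1)
    (Filter.mem_of_superset (Filter.inter_mem hV (inv_mem_nhds_one G hV)) ?_)
  rintro g ⟨hg, hg'⟩
  have hgK : g • K ⊆ K := (Set.smul_set_subset_mul hg).trans hVK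
  have hgK' : g⁻¹ • K ⊆ K := (Set.smul_set_subset_mul (s := V) hg').trans hVK
  exact MulAction.mem_stabilizer_iff.2 (hgK.antisymm (Set.subset_smul_set_iff.2 hgK'))

lemma Subgroup.isClosed_of_inter_subset {H : Subgroup G} {V K : Set G} (hV : IsOpen V)
    (h1 : (1 : G) ∈ V) (hK : IsClosed K) (hHV : (H : Set G) ∩ V ⊆ K) (hKH : K ⊆ H) :
    IsClosed (H : Set G) := by
  refine isClosed_of_closure_subset fun h hh => ?_
  obtain ⟨y, hyV, hyH⟩ := mem_closure_iff.1 hh (h • V) (hV.smul h) ⟨1, h1, mul_one h⟩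
  obtain ⟨v, hv, rfl⟩ := hyV
  have hh' : h ∈ H.topologicalClosure := by rwa [← SetLike.mem_coe, H.topologicalClosure_coe]
  have hvcl : v ∈ H.topologicalClosure := by
    simpa using H.topologicalClosure.mul_mem (H.topologicalClosure.inv_mem hh')
      (H.le_topologicalClosure hyH)
  rw [← SetLike.mem_coe, H.topologicalClosure_coe] at hvcl
  have hvH : v ∈ H := hKH (closure_minimal hHV hK (hV.closure_inter ⟨hvcl, hv⟩))
  simpa using H.mul_mem hyH (H.inv_mem hvH)

/-- The stabiliser of the compact open set `N * O`, for a compact open neighbourhood `O` of `1`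
with `N * O ⊆ U`. -/
lemma exists_isCompact_isOpen_subgroup_between [LocallyCompactSpace G] [T2Space G]
    [TotallyDisconnectedSpace G] {N : Subgroup G} (hN : IsCompact (N : Set G)) {U : Set G}
    (hU : IsOpen U) (hNU : (N : Set G) ⊆ U) :
    ∃ W : Subgroup G, IsCompact (W : Set G) ∧ IsOpen (W : Set G) ∧
      (N : Set G) ⊆ W ∧ (W : Set G) ⊆ U := by
  obtain ⟨V, hV, hNV⟩ := compact_open_separated_mul_right hN hU hNU
  obtain ⟨O, hOc, hOo, h1O, hOV⟩ := exists_isCompact_isOpen_subset hV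
  have h1K : (1 : G) ∈ (N : Set G) * O := ⟨1, N.one_mem, 1, h1O, one_mul 1⟩
  have hWo := isOpen_stabilizer_of_isCompact (hN.mul hOc) (hOo.mul_left (s := N))
  refine ⟨MulAction.stabilizer G ((N : Set G) * O),
    (hN.mul hOc).of_isClosed_subset (Subgroup.isClosed_of_isOpen _ hWo)
      (stabilizer_subset_of_one_mem h1K), hWo, fun n hn => ?_,
    (stabilizer_subset_of_one_mem h1K).trans ((Set.mul_subset_mul_left hOV).trans hNV)⟩
  rw [SetLike.mem_coe, MulAction.mem_stabilizer_iff, ← smul_mul_assoc,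
    leftCoset_mem_leftCoset N hn]

end Subgroups

section TidyAbove

lemma exists_eq_of_antitone_of_finite {X : Type*} {S : ℕ → Set X} (hS : Antitone S)
    (h0 : (S 0).Finite) : ∃ n₀, ∀ m, n₀ ≤ m → S m = S n₀ := by
  have hfin : ∀ m, (S m).Finite := fun m => h0.subset (hS (Nat.zero_le m))
  obtain ⟨n₀, hn₀⟩ := WellFoundedGT.monotone_chain_condition (α := ℕᵒᵈ)
    ⟨fun m => OrderDual.toDual (S m).ncard, fun _ _ h => Set.ncard_le_ncard (hS h) (hfin _)⟩
  exact ⟨n₀, fun m hm => Set.eq_of_subset_of_ncard_le (hS hm)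
    (congrArg OrderDual.ofDual (hn₀ m hm) : (S n₀).ncard = (S m).ncard).le (hfin n₀)⟩

variable [Group G]

lemma subset_mul_inf_of_image_mk_eq {H H' K : Subgroup G} (hle : H' ≤ H)
    (h : (QuotientGroup.mk '' (H : Set G) : Set (G ⧸ K)) = QuotientGroup.mk '' (H' : Set G)) :
    (H : Set G) ⊆ H' * (H ⊓ K : Subgroup G) := by
  intro x hx
  obtain ⟨y, hy, hyx⟩ : (x : G ⧸ K) ∈ QuotientGroup.mk '' (H' : Set G) := h ▸ ⟨x, hx, rfl⟩
  exact ⟨y, hy, y⁻¹ * x, ⟨H.mul_mem (H.inv_mem (hle hy)) hx, QuotientGroup.eq.1 hyx⟩,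
    mul_inv_cancel_left y x⟩

lemma mul_subset_mul_of_subset_mul_right {A B C D : Subgroup G} (hB : (B : Set G) ⊆ C * D)
    (hC : C ≤ A) : (A : Set G) * B ⊆ A * D := by
  rintro _ ⟨a, ha, b, hb, rfl⟩
  obtain ⟨c, hc, d, hd, rfl⟩ := hB hb
  exact ⟨a * c, A.mul_mem ha (hC hc), d, hd, mul_assoc _ _ _⟩

lemma mul_subset_mul_of_subset_mul_left {A B C D : Subgroup G} (hA : (A : Set G) ⊆ C * D)
    (hD : D ≤ B) : (A : Set G) * B ⊆ C * B := by
  rintro _ ⟨a, ha, b, hb, rfl⟩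
  obtain ⟨c, hc, d, hd, rfl⟩ := hA ha
  exact ⟨c, hc, d * b, B.mul_mem (hD hd) hb, (mul_assoc _ _ _).symm⟩

lemma tidyAbove_iff_subset {α : MulAut G} {V : Subgroup G} :
    TidyAbove α (V : Set G) ↔ (V : Set G) ⊆ plusPart α V * minusPart α V := by
  refine ⟨fun h => h.le, fun h => h.antisymm ?_⟩
  rintro _ ⟨p, hp, m, hm, rfl⟩
  exact V.mul_mem (by simpa using mem_plusPart_iff.1 hp 0 le_rfl)
    (by simpa using mem_minusPart_iff.1 hm 0 le_rfl)

lemma tidyAbove_inv {α : MulAut G} {V : Subgroup G} (h : TidyAbove α (V : Set G)) :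
    TidyAbove α⁻¹ (V : Set G) := by
  refine tidyAbove_iff_subset.2 fun x hx => ?_
  obtain ⟨p, hp, m, hm, hpm⟩ := h.le (V.inv_mem hx)
  rw [← minusPart_eq_plusPart_inv, minusPart_inv, ← coe_orbitSubgroup_Ici_zero,
    ← coe_orbitSubgroup_Iic_zero]
  rw [← coe_orbitSubgroup_Iic_zero] at hp
  rw [← coe_orbitSubgroup_Ici_zero] at hm
  exact ⟨m⁻¹, inv_mem hm, p⁻¹, inv_mem hp, by
    simp [← mul_inv_rev, show p * m = x⁻¹ from hpm]⟩

end TidyAbove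

section TidyAboveWindows

variable [Group G] [TopologicalSpace G] [IsTopologicalGroup G] [T2Space G]
  {α : MulAut G} (hα : ∀ z : ℤ, Continuous ⇑(α ^ z)) {W : Subgroup G}
  (hWc : IsCompact (W : Set G)) (hWo : IsOpen (W : Set G))

local notation "window" a:max b:max => orbitSubgroup α W (Set.Icc a b)

omit [TopologicalSpace G] [IsTopologicalGroup G] [T2Space G] in
lemma window_subset_window_mul_window {n₀ : ℕ}
    (hP : ∀ a b : ℤ, n₀ ≤ b - a → (window a b : Set G) ⊆ window (a - 1) b * window a (b + 1))
    (n : ℕ) {a b : ℤ} (hab : n₀ ≤ b - a) :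
    (window a b : Set G) ⊆ window (a - n) b * window a (b + n) := by
  have hright : ∀ k : ℕ, ∀ a b : ℤ, n₀ ≤ b - a →
      (window a b : Set G) ⊆ window (a - 1) b * window a (b + k) := by
    intro k
    induction k with
    | zero => exact fun a b _ x hx => ⟨1, Subgroup.one_mem _, x, by simpa using hx, one_mul x⟩
    | succ k ih =>
      intro a b hab
      -- split the whole window `[a, b + k]`: its left factor is absorbed by `window (a - 1) b`
      refine (ih a b hab).trans ((mul_subset_mul_of_subset_mul_right (hP a (b + k) (by omega))
        (orbitSubgroup_anti (Set.Icc_subset_Icc le_rfl (by omega)))).trans ?_)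
      rw [add_assoc, Nat.cast_succ]
  suffices ∀ j : ℕ, (window a b : Set G) ⊆ window (a - j) b * window a (b + n) from this n
  intro j
  induction j with
  | zero => exact fun x hx => ⟨x, by simpa using hx, 1, Subgroup.one_mem _, mul_one x⟩
  | succ j ih =>
    refine ih.trans ((mul_subset_mul_of_subset_mul_left (hright n (a - j) b (by omega))
      (orbitSubgroup_anti (Set.Icc_subset_Icc (by omega) le_rfl))).trans ?_)
    rw [Nat.cast_succ, sub_add_eq_sub_sub]

omit [TopologicalSpace G] [IsTopologicalGroup G] [T2Space G] in
lemma image_zpow_window (s a b : ℤ) :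
    ⇑(α ^ s) '' (window a b : Set G) = window (a - s) (b - s) := by
  ext x
  rw [mem_image_zpow_iff, SetLike.mem_coe, zpow_apply_mem_orbitSubgroup, SetLike.mem_coe]
  refine ⟨fun h k hk => ?_, fun h k hk => ?_⟩
  · simpa using h (k + s) ⟨by linarith [hk.1], by linarith [hk.2]⟩
  · exact h (k + -s) ⟨by linarith [hk.1], by linarith [hk.2]⟩

include hα hWc hWo in
lemma exists_window_subset_window_mul_window :
    ∃ n₀ : ℕ, ∀ a b : ℤ, n₀ ≤ b - a →
      (window a b : Set G) ⊆ window (a - 1) b * window a (b + 1) := by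
  set K := window 1 1
  have : DiscreteTopology (G ⧸ K) :=
    QuotientGroup.discreteTopology (isOpen_orbitSubgroup hα hWo (Set.finite_Icc 1 1))
  -- the number of `K`-cosets met by `window (-m) 0` decreases in `m`, hence stabilises
  obtain ⟨n₀, hn₀⟩ := exists_eq_of_antitone_of_finite
    (S := fun m : ℕ => (QuotientGroup.mk '' (window (-m) 0 : Set G) : Set (G ⧸ K)))
    (fun m m' h => Set.image_mono (orbitSubgroup_anti (Set.Icc_subset_Icc (by omega) le_rfl)))
    ((isCompact_orbitSubgroup hα hWc ⟨0, by simp⟩).image continuous_quotient_mk').finite_of_discrete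
  refine ⟨n₀, fun a b hab => ?_⟩
  obtain ⟨m, hm, rfl⟩ : ∃ m : ℕ, n₀ ≤ m ∧ a = b - m := ⟨(b - a).toNat, by omega, by omega⟩
  have hcov : (window (-m) 0 : Set G) ⊆ window (-(m + 1 : ℕ)) 0 * window (-m) 1 :=
    (subset_mul_inf_of_image_mk_eq (orbitSubgroup_anti (Set.Icc_subset_Icc (by omega) le_rfl))
      ((hn₀ m hm).trans (hn₀ (m + 1) (by omega)).symm)).trans
    (Set.mul_subset_mul_left fun x hx k hk => ?_)
  · have := Set.image_mono (f := ⇑(α ^ (-b))) hcov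
    rw [Set.image_mul, image_zpow_window, image_zpow_window, image_zpow_window] at this
    convert this using 4 <;> push_cast <;> first | ring1 | (congr 1 <;> ring1)
  · obtain hk0 | rfl : k ≤ 0 ∨ k = 1 := by have := hk.2; omega
    exacts [hx.1 k ⟨hk.1, hk0⟩, hx.2 1 ⟨le_rfl, le_rfl⟩]

omit [TopologicalSpace G] [IsTopologicalGroup G] [T2Space G] in
lemma plusPart_window {a b : ℤ} (hab : a ≤ b) :
    plusPart α (window a b) = orbitSubgroup α W (Set.Iic b) := by
  ext x
  rw [mem_plusPart_iff, SetLike.mem_coe, mem_orbitSubgroup]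
  simp only [SetLike.mem_coe, zpow_apply_mem_orbitSubgroup, Set.mem_Icc, Set.mem_Iic]
  refine ⟨fun h i hi => by simpa using h (i - b) (by omega) b ⟨hab, le_rfl⟩,
    fun h k hk j hj => h _ (by omega)⟩

omit [TopologicalSpace G] [IsTopologicalGroup G] [T2Space G] in
lemma minusPart_window {a b : ℤ} (hab : a ≤ b) :
    minusPart α (window a b) = orbitSubgroup α W (Set.Ici a) := by
  ext x
  rw [mem_minusPart_iff, SetLike.mem_coe, mem_orbitSubgroup]
  simp only [SetLike.mem_coe, zpow_apply_mem_orbitSubgroup, Set.mem_Icc, Set.mem_Ici]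
  refine ⟨fun h i hi => by simpa using h (i - a) (by omega) a ⟨le_rfl, hab⟩,
    fun h k hk j hj => h _ (by omega)⟩

include hα hWc in
lemma window_subset_plus_mul_minus {n₀ : ℕ}
    (hP : ∀ a b : ℤ, n₀ ≤ b - a → (window a b : Set G) ⊆ window (a - 1) b * window a (b + 1))
    {a b : ℤ} (hab : n₀ ≤ b - a) :
    (window a b : Set G) ⊆ orbitSubgroup α W (Set.Iic b) * orbitSubgroup α W (Set.Ici a) := by
  intro x hx
  have := mem_iInter_mul_iInter (A := fun n : ℕ => (window (a - n) b : Set G))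
    (B := fun n : ℕ => (window a (b + n) : Set G))
    (fun n => isCompact_orbitSubgroup hα hWc ⟨b, by simp; omega⟩)
    (fun n => isClosed_orbitSubgroup hα hWc.isClosed _)
    (fun n n' h => orbitSubgroup_anti (Set.Icc_subset_Icc (by simp; omega) le_rfl))
    (fun n n' h => orbitSubgroup_anti (Set.Icc_subset_Icc le_rfl (by simp; omega)))
    (fun n => window_subset_window_mul_window hP n hab hx)
  convert this using 2 <;> ext y <;> simp only [Set.mem_iInter, SetLike.mem_coe, mem_orbitSubgroup,
    Set.mem_Iic, Set.mem_Ici, Set.mem_Icc]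
  · exact ⟨fun h n k hk => h k hk.2, fun h k hk => h (a - k).toNat k ⟨by omega, hk⟩⟩
  · exact ⟨fun h n k hk => h k hk.1, fun h k hk => h (k - b).toNat k ⟨hk, by omega⟩⟩

include hα hWc hWo in
lemma exists_tidyAbove_window : ∃ n : ℕ, TidyAbove α (window (-n) 0 : Set G) := by
  obtain ⟨n₀, hP⟩ := exists_window_subset_window_mul_window hα hWc hWo
  refine ⟨n₀, tidyAbove_iff_subset.2 ?_⟩
  rw [plusPart_window (by omega), minusPart_window (by omega)]
  exact window_subset_plus_mul_minus hα hWc hP (by omega)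

end TidyAboveWindows

section Baire

variable [Group G] [TopologicalSpace G] [IsTopologicalGroup G] [LocallyCompactSpace G]

/-- Baire category: the union is a locally compact group, so some `P k` is open in it; compactness
then does the rest. -/
lemma exists_subset_of_isCompact_subset_iUnion {P : ℕ → Subgroup G} (hP : Monotone P)
    (hPc : ∀ k, IsClosed (P k : Set G)) (hU : IsClosed (⋃ k, (P k : Set G))) {Z : Set G}
    (hZ : IsCompact Z) (hZU : Z ⊆ ⋃ k, (P k : Set G)) : ∃ k, Z ⊆ P k := by
  set H := ⨆ k, P k
  have hH : (H : Set G) = ⋃ k, (P k : Set G) := Subgroup.coe_iSup_of_directed hP.directed_le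
  rw [← hH] at hU hZU
  have : LocallyCompactSpace H := hU.locallyCompactSpace
  have hcover : ⋃ k, ((P k).subgroupOf H : Set H) = Set.univ := by
    refine Set.eq_univ_of_forall fun x => ?_
    obtain ⟨k, hk⟩ := Set.mem_iUnion.1 (hH ▸ x.2 : (x : G) ∈ ⋃ k, (P k : Set G))
    exact Set.mem_iUnion.2 ⟨k, hk⟩
  obtain ⟨k₀, y, hy⟩ := nonempty_interior_of_iUnion_of_closed
    (fun k => (hPc k).preimage continuous_subtype_val) hcover
  have hopen : ∀ i, IsOpen ((P (k₀ + i)).subgroupOf H : Set H) := fun i =>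
    Subgroup.isOpen_mono (Subgroup.subgroupOf_mono H (hP (Nat.le_add_right k₀ i)))
      (Subgroup.isOpen_of_mem_nhds ((P k₀).subgroupOf H) (mem_interior_iff_mem_nhds.1 hy))
  have hZcover : Subtype.val ⁻¹' Z ⊆ ⋃ i, ((P (k₀ + i)).subgroupOf H : Set H) := fun x _ => by
    obtain ⟨k, hk⟩ := Set.mem_iUnion.1 (hcover.symm ▸ Set.mem_univ x)
    exact Set.mem_iUnion.2 ⟨k, Subgroup.subgroupOf_mono H (hP (Nat.le_add_left k k₀)) hk⟩
  obtain ⟨i, hi⟩ := (hU.isClosedEmbedding_subtypeVal.isCompact_preimage hZ).elim_directed_cover _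
    hopen hZcover (Monotone.directed_le fun i j hij =>
      SetLike.coe_subset_coe.2 (Subgroup.subgroupOf_mono H (hP (Nat.add_le_add_left hij k₀))))
  exact ⟨k₀ + i, fun z hz => hi (show (⟨z, hZU hz⟩ : H) ∈ Subtype.val ⁻¹' Z from hz)⟩

end Baire

section BoundedOrbits

variable [Group G] [TopologicalSpace G] [IsTopologicalGroup G]

def boundedOrbitSubgroup (α : MulAut G) : Subgroup G where
  carrier := {x | ∃ C : Set G, IsCompact C ∧ ∀ z : ℤ, (α ^ z) x ∈ C}
  one_mem' := ⟨{1}, isCompact_singleton, fun z => by simp⟩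
  mul_mem' := fun ⟨C, hC, hx⟩ ⟨D, hD, hy⟩ =>
    ⟨C * D, hC.mul hD, fun z => by rw [map_mul]; exact Set.mul_mem_mul (hx z) (hy z)⟩
  inv_mem' := fun ⟨C, hC, hx⟩ =>
    ⟨C⁻¹, hC.inv, fun z => by rw [map_inv]; exact Set.inv_mem_inv.2 (hx z)⟩

variable {α : MulAut G} {x : G}

lemma boundedOrbitSubgroup_inv (α : MulAut G) :
    boundedOrbitSubgroup α⁻¹ = boundedOrbitSubgroup α := by
  ext x
  refine ⟨fun ⟨C, hC, h⟩ => ⟨C, hC, fun z => ?_⟩, fun ⟨C, hC, h⟩ => ⟨C, hC, fun z => ?_⟩⟩ <;>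
    simpa [inv_zpow'] using h (-z)

lemma zpow_apply_mem_boundedOrbitSubgroup (hx : x ∈ boundedOrbitSubgroup α) (s : ℤ) :
    (α ^ s) x ∈ boundedOrbitSubgroup α := by
  obtain ⟨C, hC, h⟩ := hx
  exact ⟨C, hC, fun z => by rw [zpow_apply_zpow_apply]; exact h (z + s)⟩

lemma mem_boundedOrbitSubgroup_of_mem_orbitSubgroup [T2Space G]
    (hα : ∀ z : ℤ, Continuous ⇑(α ^ z)) {W : Subgroup G} (hW : IsCompact (W : Set G)) {a b : ℤ}
    (ha : x ∈ orbitSubgroup α W (Set.Ici a)) (hb : x ∈ orbitSubgroup α W (Set.Iic b)) :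
    x ∈ boundedOrbitSubgroup α := by
  refine ⟨_, (isCompact_orbitSubgroup hα hW (Set.nonempty_Ici (a := a))).union
    (isCompact_orbitSubgroup hα hW (Set.nonempty_Iic (a := b))), fun z => ?_⟩
  rcases le_total 0 z with hz | hz
  · exact Or.inl (zpow_apply_mem_orbitSubgroup.2 fun k hk => ha _ (by simp at hk ⊢; omega))
  · exact Or.inr (zpow_apply_mem_orbitSubgroup.2 fun k hk => hb _ (by simp at hk ⊢; omega))

end BoundedOrbits

section TidyBelow

variable [Group G] [TopologicalSpace G]

lemma mem_nub_iff {α : MulAut G} {x : G} :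
    x ∈ nub α ↔ ∀ T : Subgroup G, IsCompact (T : Set G) → IsOpen (T : Set G) →
      Tidy α (T : Set G) → x ∈ T := by
  simp only [nub, Subgroup.mem_iInf, Set.mem_ofPred_eq, and_imp]

lemma tidy_inv {α : MulAut G} {V : Subgroup G} (h : Tidy α (V : Set G)) :
    Tidy α⁻¹ (V : Set G) := by
  refine ⟨tidyAbove_inv h.1, h.2.2, ?_⟩
  rw [inv_inv, minusPart_inv]
  exact h.2.1

lemma nub_inv (α : MulAut G) : nub α⁻¹ = nub α := by
  ext x
  simp only [mem_nub_iff]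
  exact ⟨fun h T hTc hTo hT => h T hTc hTo (tidy_inv hT),
    fun h T hTc hTo hT => h T hTc hTo (by simpa using tidy_inv hT)⟩

variable [IsTopologicalGroup G] [T2Space G] [LocallyCompactSpace G] {α : MulAut G}
  (hα : ∀ z : ℤ, Continuous ⇑(α ^ z))
include hα

lemma mem_orbitSubgroup_univ_of_mem_plusPart {T : Subgroup G} (hTc : IsCompact (T : Set G))
    (hT : IsClosed (⋃ k : ℕ, ⇑(α ^ k) '' plusPart α T)) {x : G} (hx : x ∈ plusPart α T)
    (hxb : x ∈ boundedOrbitSubgroup α) : x ∈ orbitSubgroup α T Set.univ := by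
  obtain ⟨C, hC, hxC⟩ := hxb
  set P : ℕ → Subgroup G := fun k => orbitSubgroup α T (Set.Iic (-k))
  have hPU : ⋃ k, (P k : Set G) = ⋃ k : ℕ, ⇑(α ^ k) '' plusPart α T :=
    Set.iUnion_congr fun k => coe_orbitSubgroup_Iic α T k
  rw [← hPU] at hT
  have horbit : Set.range (fun z : ℤ => (α ^ z) x) ⊆ ⋃ k, (P k : Set G) := by
    rintro _ ⟨z, rfl⟩
    exact Set.mem_iUnion.2 ⟨z.toNat, zpow_apply_mem_orbitSubgroup.2 fun k hk =>
      mem_plusPart_iff.1 hx _ (by simp only [Set.mem_Iic] at hk; omega)⟩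
  -- the closure of the orbit is a compact subset of `T₊₊`, hence lies in one `αᴷ(T₊)`
  obtain ⟨K, hK⟩ := exists_subset_of_isCompact_subset_iUnion (P := P)
    (fun k l h => orbitSubgroup_anti (Set.Iic_subset_Iic.2 (by omega)))
    (fun k => isClosed_orbitSubgroup hα hTc.isClosed _) hT
    (hC.closure_of_subset (Set.range_subset_iff.2 hxC)) (closure_minimal horbit hT)
  intro z _
  simpa using
    zpow_apply_mem_orbitSubgroup.1 (hK (subset_closure ⟨z + K, rfl⟩)) (-K) Set.self_mem_Iic

lemma mem_orbitSubgroup_univ_of_tidy {T : Subgroup G} (hTc : IsCompact (T : Set G))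
    (hT : Tidy α (T : Set G)) {x : G} (hxT : x ∈ T) (hxb : x ∈ boundedOrbitSubgroup α) :
    x ∈ orbitSubgroup α T Set.univ := by
  obtain ⟨p, hp, m, hm, rfl⟩ : x ∈ plusPart α T * minusPart α T := hT.1 ▸ hxT
  obtain ⟨C, hC, hxC⟩ := hxb
  have hpb : p ∈ boundedOrbitSubgroup α := by
    refine ⟨T ∪ C * T, hTc.union (hC.mul hTc), fun z => ?_⟩
    rcases le_total z 0 with hz | hz
    · exact Or.inl (mem_plusPart_iff.1 hp z hz)
    · exact Or.inr ⟨_, hxC z, ((α ^ z) m)⁻¹, T.inv_mem (mem_minusPart_iff.1 hm z hz),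
        by simp⟩
  have hmb : m ∈ boundedOrbitSubgroup α := by
    simpa using (boundedOrbitSubgroup α).mul_mem ((boundedOrbitSubgroup α).inv_mem hpb)
      ⟨C, hC, hxC⟩
  have hpT := mem_orbitSubgroup_univ_of_mem_plusPart hα hTc hT.2.1 hp hpb
  have hmT := mem_orbitSubgroup_univ_of_mem_plusPart (continuous_inv_zpow hα) hTc hT.2.2 hm
    (boundedOrbitSubgroup_inv α ▸ hmb)
  refine (orbitSubgroup α T Set.univ).mul_mem hpT fun k _ => ?_
  simpa [inv_zpow'] using hmT (-k) trivial

/-- For each finite family `F` of tidy subgroups, `α^j(g) = y * d` with `y` a cluster point of the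
forward orbit and `d` in all members of `F`; `d` has bounded orbit, so its orbit stays in them.
Compactness then writes `g` as (orbit in `V`) * (orbit in every tidy subgroup, hence in `nub α`). -/
lemma mem_orbitSubgroup_univ_of_nub_subset {V : Subgroup G} (hVc : IsCompact (V : Set G))
    (hnub : (nub α : Set G) ⊆ V) {g : G} (hg : g ∈ minusPart α V)
    (hgb : g ∈ boundedOrbitSubgroup α) : g ∈ orbitSubgroup α V Set.univ := by
  classical
  obtain ⟨y, hyV, hy⟩ := exists_mapClusterPt_mem_orbitSubgroup_univ hα hVc hg
  set 𝒯 := {T : Subgroup G | IsCompact (T : Set G) ∧ IsOpen (T : Set G) ∧ Tidy α (T : Set G)}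
  set K : Finset 𝒯 → Set G := fun F => ⋂ T ∈ F, (orbitSubgroup α T Set.univ : Set G)
  have hK : ∀ F, g ∈ (orbitSubgroup α V Set.univ : Set G) * K F := by
    intro F
    have hD : ∀ᶠ z in 𝓝 y, y⁻¹ * z ∈ ⋂ T ∈ F, (T : Set G) :=
      ((continuous_const.mul continuous_id).tendsto' y 1 (inv_mul_cancel y)).eventually
        ((Filter.biInter_finset_mem F).2 fun T _ => T.2.2.1.mem_nhds T.1.one_mem)
    obtain ⟨j, hj⟩ := (hy.frequently hD).exists
    have hdb : y⁻¹ * (α ^ (j : ℤ)) g ∈ boundedOrbitSubgroup α :=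
      mul_mem (inv_mem ⟨V, hVc, fun z => hyV z trivial⟩)
        (zpow_apply_mem_boundedOrbitSubgroup hgb j)
    refine ⟨(α ^ (-j : ℤ)) y, zpow_apply_mem_orbitSubgroup_univ hyV,
      (α ^ (-j : ℤ)) (y⁻¹ * (α ^ (j : ℤ)) g), Set.mem_iInter₂.2 fun T hT =>
        zpow_apply_mem_orbitSubgroup_univ
          (mem_orbitSubgroup_univ_of_tidy hα T.2.1 T.2.2.2 (Set.mem_iInter₂.1 hj T hT) hdb), ?_⟩
    simp [← map_mul]
  obtain ⟨a, ha, b, hb, rfl⟩ := mem_iInter_mul_iInter (A := fun _ => _) (B := K)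
    (fun _ => isCompact_orbitSubgroup hα hVc Set.univ_nonempty)
    (fun F => isClosed_biInter fun T _ => isClosed_orbitSubgroup hα T.2.1.isClosed _)
    antitone_const (fun F F' h => Set.biInter_subset_biInter_left h) hK
  refine mul_mem (Set.mem_iInter.1 ha ∅) fun k _ => hnub (mem_nub_iff.2 fun T hTc hTo hT => ?_)
  exact Set.mem_iInter₂.1 (Set.mem_iInter.1 hb {⟨T, hTc, hTo, hT⟩}) _ (Finset.mem_singleton_self _)
    k trivial

lemma isClosed_iUnion_image_plusPart {V : Subgroup G} (hVc : IsCompact (V : Set G))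
    (hVo : IsOpen (V : Set G)) (hnub : (nub α : Set G) ⊆ V) (hV : TidyAbove α (V : Set G)) :
    IsClosed (⋃ k : ℕ, ⇑(α ^ k) '' plusPart α V) := by
  set P : ℕ → Subgroup G := fun k => orbitSubgroup α V (Set.Iic (-k))
  have hP : Monotone P := fun k l h => orbitSubgroup_anti (Set.Iic_subset_Iic.2 (by omega))
  have hP0 : (P 0 : Set G) = plusPart α V := by simpa [P] using coe_orbitSubgroup_Iic α V 0
  rw [← Set.iUnion_congr fun k => coe_orbitSubgroup_Iic α V k,
    ← Subgroup.coe_iSup_of_directed hP.directed_le]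
  refine Subgroup.isClosed_of_inter_subset hVo V.one_mem
    (isClosed_orbitSubgroup hα hVc.isClosed _) ?_ (SetLike.coe_subset_coe.2 (le_iSup P 0))
  rintro _ ⟨hw, hwV⟩
  obtain ⟨p, hp, m, hm, rfl⟩ := hV.le hwV
  rw [← hP0] at hp
  obtain ⟨k, hk⟩ := (Subgroup.mem_iSup_of_directed hP.directed_le).1
    (by simpa using mul_mem (inv_mem (le_iSup P 0 hp)) hw : m ∈ ⨆ k, P k)
  have hmb := mem_boundedOrbitSubgroup_of_mem_orbitSubgroup hα hVc
    (by rwa [← SetLike.mem_coe, coe_orbitSubgroup_Ici_zero]) hk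
  have hmV := mem_orbitSubgroup_univ_of_nub_subset hα hVc hnub hm hmb
  exact mul_mem hp fun j _ => hmV j trivial

lemma tidy_of_tidyAbove_of_nub_subset {V : Subgroup G} (hVc : IsCompact (V : Set G))
    (hVo : IsOpen (V : Set G)) (hnub : (nub α : Set G) ⊆ V) (hV : TidyAbove α (V : Set G)) :
    Tidy α (V : Set G) :=
  ⟨hV, isClosed_iUnion_image_plusPart hα hVc hVo hnub hV,
    isClosed_iUnion_image_plusPart (continuous_inv_zpow hα) hVc hVo (by rwa [nub_inv])
      (tidyAbove_inv hV)⟩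

end TidyBelow

/-- If `N` is a compact `α`-stable subgroup containing `nub α`, then every
open set containing `N` contains a tidy compact open subgroup containing `N`. -/
theorem exists_tidy_between_of_nub_subset
    [Group G] [TopologicalSpace G] [IsTopologicalGroup G] [T2Space G]
    [TotallyDisconnectedSpace G] [LocallyCompactSpace G]
    (α : MulAut G) (hαc : Continuous ⇑α) (hαc' : Continuous ⇑(α⁻¹))
    (N : Subgroup G) (hNc : IsCompact (N : Set G))
    (hNs : ⇑α '' (N : Set G) = (N : Set G))
    (hnub : (nub α : Set G) ⊆ (N : Set G)) :
    ∀ U : Set G, IsOpen U → (N : Set G) ⊆ U →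
      ∃ V : Subgroup G, IsCompact (V : Set G) ∧ IsOpen (V : Set G) ∧
        Tidy α (V : Set G) ∧ (N : Set G) ⊆ (V : Set G) ∧ (V : Set G) ⊆ U := by
  intro U hU hNU
  have hα := continuous_zpow_of_continuous hαc hαc'
  obtain ⟨W, hWc, hWo, hNW, hWU⟩ := exists_isCompact_isOpen_subgroup_between hNc hU hNU
  obtain ⟨n, hn⟩ := exists_tidyAbove_window hα hWc hWo
  have hVc := isCompact_orbitSubgroup hα hWc (S := Set.Icc (-n) 0) ⟨0, by simp⟩
  have hVo := isOpen_orbitSubgroup hα hWo (Set.finite_Icc (-n : ℤ) 0)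
  have hNV : (N : Set G) ⊆ orbitSubgroup α W (Set.Icc (-n) 0) := fun x hx k _ =>
    hNW (zpow_apply_mem_of_image_eq hNs k hx)
  exact ⟨_, hVc, hVo, tidy_of_tidyAbove_of_nub_subset hα hVc hVo (hnub.trans hNV) hn, hNV,
    fun x hx => hWU (by simpa using hx 0 ⟨by omega, le_rfl⟩)⟩
end

section
/- Let G be a compact, Hausdorff, totally disconnected topological group, α a topological group automorphism of G, and N a closed normal α-stable subgroup of G. Let q : G → G/N be the quotient map and let ᾱ be the automorphism of G/N induced by α. Then nub(ᾱ) = q(nub(α)). -/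
/-!
In a compact group a compact open subgroup is tidy for `α` exactly when it is `α`-stable: a Baire
category argument shows that `V₊₊` closed forces `α(V₊) = V₊`, likewise for `V₋`, so `V = V₊V₋`
is stable. Hence `nub α` is the intersection of the directed family of `α`-stable open subgroups,
and a continuous map out of a compact space carries such an intersection onto the intersection of
the images, which are `ᾱ`-stable open subgroups of `G/N`. Conversely, the preimage of a subgroup
tidy for `ᾱ` is tidy for `α`.
-/

open Pointwise Filter Topology

variable {G : Type*}

theorem image_iInter_of_directed {X Y ι : Type*} [TopologicalSpace X] [TopologicalSpace Y]
    [CompactSpace X] [T1Space Y] [Nonempty ι] {f : X → Y} (hf : Continuous f)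
    {K : ι → Set X} (hd : Directed (· ⊇ ·) K) (hK : ∀ i, IsClosed (K i)) :
    f '' ⋂ i, K i = ⋂ i, f '' K i := by
  refine subset_antisymm (Set.image_iInter_subset K f) fun y hy => ?_
  have hfiber : IsClosed (f ⁻¹' {y}) := isClosed_singleton.preimage hf
  obtain ⟨x, hx⟩ := IsCompact.nonempty_iInter_of_directed_nonempty_isCompact_isClosed
    (fun i => K i ∩ f ⁻¹' {y}) (fun i j => (hd i j).imp fun _ hk =>
      ⟨Set.inter_subset_inter_left _ hk.1, Set.inter_subset_inter_left _ hk.2⟩)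
    (fun i => by simpa [Set.inter_comm, ← Set.image_inter_nonempty_iff] using Set.mem_iInter.1 hy i)
    (fun i => ((hK i).inter hfiber).isCompact) (fun i => (hK i).inter hfiber)
  simp only [Set.mem_iInter, Set.mem_inter_iff, Set.mem_preimage, Set.mem_singleton_iff] at hx
  obtain ⟨i⟩ := ‹Nonempty ι›
  exact ⟨x, Set.mem_iInter.2 fun j => (hx j).1, (hx i).2⟩

theorem Subgroup.exists_eq_top_of_monotone_of_isClosed {K : Type*} [Group K]
    [TopologicalSpace K] [IsTopologicalGroup K] [CompactSpace K] [T2Space K]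
    {S : ℕ → Subgroup K} (hmono : Monotone S) (hcl : ∀ k, IsClosed (S k : Set K))
    (hcov : ⋃ k, (S k : Set K) = Set.univ) : ∃ k, S k = ⊤ := by
  obtain ⟨k, g, hg⟩ := nonempty_interior_of_iUnion_of_closed hcl hcov
  have hopen : IsOpen (S k : Set K) := (S k).isOpen_of_mem_nhds (mem_interior_iff_mem_nhds.1 hg)
  obtain ⟨j, hj⟩ := isCompact_univ.elim_directed_cover (fun j => (S (j ⊔ k) : Set K))
    (fun j => Subgroup.isOpen_mono (hmono le_sup_right) hopen)
    (hcov ▸ Set.iUnion_mono fun j => hmono le_sup_left)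
    (hmono.comp (monotone_id.sup monotone_const)).directed_le
  exact ⟨j ⊔ k, eq_top_iff.2 fun x _ => hj (Set.mem_univ x)⟩

theorem Function.Semiconj.image_preimage {X Y : Type*} {f : X → Y} {ga : X → X} {gb : Y → Y}
    (h : Function.Semiconj f ga gb) (hga : Function.Surjective ga)
    (hgb : Function.Injective gb) (A : Set Y) : ga '' (f ⁻¹' A) = f ⁻¹' (gb '' A) := by
  refine subset_antisymm ?_ fun x ⟨a, ha, hax⟩ => ?_
  · rintro _ ⟨y, hy, rfl⟩
    exact ⟨f y, hy, (h y).symm⟩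
  · obtain ⟨y, rfl⟩ := hga x
    exact ⟨y, show f y ∈ A from hgb (hax.trans (h y)) ▸ ha, rfl⟩

theorem MonoidHom.preimage_mul_of_surjective {M N : Type*} [Group M] [Group N] (q : M →* N)
    (hq : Function.Surjective q) (A B : Set N) : q ⁻¹' (A * B) = q ⁻¹' A * q ⁻¹' B := by
  refine subset_antisymm (fun x ⟨a, ha, b, hb, hab⟩ => ?_) (Set.preimage_mul_preimage_subset q)
  obtain ⟨u, rfl⟩ := hq a
  refine ⟨u, ha, u⁻¹ * x, ?_, mul_inv_cancel_left u x⟩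
  rwa [Set.mem_preimage, map_mul, map_inv, ← hab, inv_mul_cancel_left]

section Tidy

variable {H : Type*} [Group H]

theorem MulAut.image_inv_eq_of_image_eq (φ : MulAut H) {s : Set H} (h : φ '' s = s) :
    ⇑(φ⁻¹) '' s = s := by
  conv_lhs => rw [← h]
  exact φ.toEquiv.symm_image_image s

theorem MulAut.image_pow_eq_of_image_eq (φ : MulAut H) {s : Set H} (h : φ '' s = s) (k : ℕ) :
    ⇑(φ ^ k) '' s = s := by
  induction k with
  | zero => simp
  | succ k ih => rw [pow_succ, MulAut.coe_mul, Set.image_comp, h, ih]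

theorem MulAut.continuous_pow [TopologicalSpace H] {φ : MulAut H} (hφ : Continuous φ) (k : ℕ) :
    Continuous ⇑(φ ^ k) := by
  induction k with
  | zero => simpa using continuous_id
  | succ k ih => rw [pow_succ, MulAut.coe_mul]; exact ih.comp hφ

theorem plusPart_subset_image_plusPart (φ : MulAut H) (V : Set H) :
    plusPart φ V ⊆ φ '' plusPart φ V := by
  rw [plusPart, Set.image_iInter φ.bijective]
  refine Set.iInter_mono' fun k => ⟨k + 1, ?_⟩
  rw [pow_succ', MulAut.coe_mul, Set.image_comp]

theorem tidy_of_image_eq [TopologicalSpace H] {φ : MulAut H} {V : Subgroup H}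
    (hV : IsClosed (V : Set H)) (h : φ '' V = V) : Tidy φ (V : Set H) := by
  have hplus : plusPart φ V = V := by
    simp only [plusPart, φ.image_pow_eq_of_image_eq h, Set.iInter_const]
  have hminus : minusPart φ V = V := by
    simp only [minusPart, φ⁻¹.image_pow_eq_of_image_eq (φ.image_inv_eq_of_image_eq h),
      Set.iInter_const]
  refine ⟨by rw [TidyAbove, hplus, hminus, coe_mul_coe], ?_, ?_⟩
  · simpa only [hplus, φ.image_pow_eq_of_image_eq h, Set.iUnion_const] using hV
  · simpa only [hminus, φ⁻¹.image_pow_eq_of_image_eq (φ.image_inv_eq_of_image_eq h),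
      Set.iUnion_const] using hV

end Tidy

section CompactGroup

variable {H : Type*} [Group H] [TopologicalSpace H] [IsTopologicalGroup H] [CompactSpace H]
  [T2Space H]

/-- The subgroups `φ^k(V₊)` increase with `k`; when their union is closed, hence a compact group,
the Baire category theorem makes the chain stabilise. -/
theorem image_plusPart_eq_of_isClosed {φ : MulAut H} (hφ : Continuous φ) {V : Subgroup H}
    (hV : IsClosed (V : Set H)) (h : IsClosed (⋃ k : ℕ, ⇑(φ ^ k) '' plusPart φ V)) :
    φ '' plusPart φ V = plusPart φ V := by
  let S : ℕ → Subgroup H := fun k => mapAut (φ ^ k) (plusSub φ V)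
  have hS : ∀ k, (S k : Set H) = ⇑(φ ^ k) '' plusPart φ V := fun k => by
    simp only [S, mapAut, plusSub, Subgroup.coe_set_mk, Subgroup.coe_iInf]
    rfl
  have hS_succ : ∀ k, (S (k + 1) : Set H) = ⇑(φ ^ k) '' (φ '' plusPart φ V) := fun k => by
    rw [hS, pow_succ, MulAut.coe_mul, Set.image_comp]
  have hmono : Monotone S := monotone_nat_of_le_succ fun k => by
    rw [← SetLike.coe_subset_coe, hS_succ, hS]
    exact Set.image_mono (plusPart_subset_image_plusPart φ V)
  have hplus_closed : IsClosed (plusPart φ V) :=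
    isClosed_iInter fun k => (hV.isCompact.image (MulAut.continuous_pow hφ k)).isClosed
  have hS_closed : ∀ k, IsClosed (S k : Set H) := fun k => by
    rw [hS]; exact (hplus_closed.isCompact.image (MulAut.continuous_pow hφ k)).isClosed
  set K := ⨆ k, S k
  have hK : (K : Set H) = ⋃ k, (S k : Set H) := Subgroup.coe_iSup_of_directed hmono.directed_le
  have : CompactSpace K := isCompact_iff_compactSpace.1 <| by
    rw [hK]; simp only [hS]; exact h.isCompact
  obtain ⟨M, hM⟩ := Subgroup.exists_eq_top_of_monotone_of_isClosed
    (S := fun k => (S k).subgroupOf K) (fun _ _ hkl => Subgroup.subgroupOf_mono _ (hmono hkl))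
    (fun k => (hS_closed k).preimage continuous_subtype_val)
    (Set.eq_univ_of_forall fun x => by
      have hx : (x : H) ∈ (K : Set H) := x.2
      rw [hK, Set.mem_iUnion] at hx
      simpa [Subgroup.mem_subgroupOf] using hx)
  have hstep : S (M + 1) ≤ S M := (le_iSup S (M + 1)).trans (Subgroup.subgroupOf_eq_top.1 hM)
  rw [← SetLike.coe_subset_coe, hS_succ, hS] at hstep
  exact subset_antisymm ((Set.image_subset_image_iff (φ ^ M).injective).1 hstep)
    (plusPart_subset_image_plusPart φ V)

theorem Tidy.image_eq {φ : MulAut H} (hφ : Continuous φ) (hφ' : Continuous ⇑(φ⁻¹))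
    {V : Subgroup H} (hV : IsClosed (V : Set H)) (ht : Tidy φ (V : Set H)) : φ '' V = V := by
  have hplus := image_plusPart_eq_of_isClosed hφ hV ht.2.1
  have hminus : φ '' minusPart φ V = minusPart φ V := by
    have := φ⁻¹.image_inv_eq_of_image_eq (image_plusPart_eq_of_isClosed hφ' hV ht.2.2)
    rwa [inv_inv] at this
  calc φ '' V = φ '' (plusPart φ V * minusPart φ V) := by rw [← ht.1]
    _ = V := by rw [Set.image_mul, hplus, hminus, ← ht.1]

end CompactGroup

section Nub

variable {H : Type*} [Group H] [TopologicalSpace H]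

theorem nub_le {φ : MulAut H} {V : Subgroup H} (hc : IsCompact (V : Set H))
    (ho : IsOpen (V : Set H)) (ht : Tidy φ (V : Set H)) : nub φ ≤ V :=
  iInf₂_le V ⟨hc, ho, ht⟩

abbrev StableOpenSubgroup (φ : MulAut H) : Type _ :=
  {V : Subgroup H // IsOpen (V : Set H) ∧ φ '' V = V}

instance (φ : MulAut H) : Nonempty (StableOpenSubgroup φ) :=
  ⟨⟨⊤, isOpen_univ, Set.image_univ_of_surjective φ.surjective⟩⟩

theorem StableOpenSubgroup.directed (φ : MulAut H) :
    Directed (· ⊇ ·) fun V : StableOpenSubgroup φ => (V.1 : Set H) := fun V W =>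
  ⟨⟨V.1 ⊓ W.1, V.2.1.inter W.2.1, by
      rw [Subgroup.coe_inf, Set.image_inter φ.injective, V.2.2, W.2.2]⟩,
    Set.inter_subset_left, Set.inter_subset_right⟩

theorem coe_nub_eq_iInter_stableOpenSubgroup [IsTopologicalGroup H] [CompactSpace H] [T2Space H]
    {φ : MulAut H} (hφ : Continuous φ) (hφ' : Continuous ⇑(φ⁻¹)) :
    (nub φ : Set H) = ⋂ V : StableOpenSubgroup φ, (V.1 : Set H) := by
  refine subset_antisymm (Set.subset_iInter fun V => ?_) fun x hx => ?_
  · have hV := V.1.isClosed_of_isOpen V.2.1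
    exact nub_le hV.isCompact V.2.1 (tidy_of_image_eq hV V.2.2)
  · simp only [nub, SetLike.mem_coe, Subgroup.mem_iInf]
    rintro V ⟨-, ho, ht⟩
    exact Set.mem_iInter.1 hx ⟨V, ho, ht.image_eq hφ hφ' (V.isClosed_of_isOpen ho)⟩

end Nub

section Equivariant

variable {G Q : Type*} [Group G] [Group Q] {q : G →* Q} {α : MulAut G} {β : MulAut Q}

theorem Function.Semiconj.mulAut_pow (h : Function.Semiconj q α β) (k : ℕ) :
    Function.Semiconj q ⇑(α ^ k) ⇑(β ^ k) := by
  induction k with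
  | zero => simpa using Function.Semiconj.id_right
  | succ k ih => rw [pow_succ, pow_succ, MulAut.coe_mul, MulAut.coe_mul]; exact ih.comp_right h

theorem Function.Semiconj.mulAut_inv (h : Function.Semiconj q α β) :
    Function.Semiconj q ⇑(α⁻¹) ⇑(β⁻¹) :=
  h.inverses_right (MulAut.apply_inv_self _ α) (MulAut.inv_apply_self _ β)

theorem plusPart_preimage (h : Function.Semiconj q α β) (A : Set Q) :
    plusPart α (q ⁻¹' A) = q ⁻¹' plusPart β A := by
  simp only [plusPart, Set.preimage_iInter,
    fun k => (h.mulAut_pow k).image_preimage (α ^ k).surjective (β ^ k).injective]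

theorem isClosed_iUnion_image_plusPart_preimage [TopologicalSpace G] [TopologicalSpace Q]
    (hq : Continuous q) (h : Function.Semiconj q α β) {A : Set Q}
    (hA : IsClosed (⋃ k : ℕ, ⇑(β ^ k) '' plusPart β A)) :
    IsClosed (⋃ k : ℕ, ⇑(α ^ k) '' plusPart α (q ⁻¹' A)) := by
  simpa only [plusPart_preimage h, Set.preimage_iUnion,
    fun k => (h.mulAut_pow k).image_preimage (α ^ k).surjective (β ^ k).injective]
    using hA.preimage hq

theorem Tidy.preimage [TopologicalSpace G] [TopologicalSpace Q] (hq : Function.Surjective q)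
    (hqc : Continuous q) (h : Function.Semiconj q α β) {W : Set Q} (ht : Tidy β W) :
    Tidy α (q ⁻¹' W) := by
  refine ⟨?_, isClosed_iUnion_image_plusPart_preimage hqc h ht.2.1,
    isClosed_iUnion_image_plusPart_preimage hqc h.mulAut_inv ht.2.2⟩
  rw [TidyAbove, minusPart, ← plusPart, plusPart_preimage h, plusPart_preimage h.mulAut_inv,
    ← q.preimage_mul_of_surjective hq]
  exact congrArg _ ht.1

theorem map_nub_le_nub [TopologicalSpace G] [TopologicalSpace Q] [IsTopologicalGroup Q]
    [CompactSpace G] (hq : Function.Surjective q) (hqc : Continuous q)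
    (h : Function.Semiconj q α β) : (nub α).map q ≤ nub β := by
  refine le_iInf₂ fun W ⟨_, ho, ht⟩ => Subgroup.map_le_iff_le_comap.2 ?_
  exact nub_le ((W.isClosed_of_isOpen ho).preimage hqc).isCompact (ho.preimage hqc)
    (ht.preimage hq hqc h)

end Equivariant

theorem nub_quotient_eq_image_general
    [Group G] [TopologicalSpace G] [IsTopologicalGroup G] [T2Space G]
    [CompactSpace G]
    (α : MulAut G) (hαc : Continuous ⇑α) (hαc' : Continuous ⇑(α⁻¹))
    (N : Subgroup G) [N.Normal] (hNcl : IsClosed (N : Set G))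
    (β : MulAut (G ⧸ N))
    (hcomm : ∀ x : G, β ((x : G ⧸ N)) = ((α x : G) : G ⧸ N)) :
    (nub β : Set (G ⧸ N)) = (fun x : G => (x : G ⧸ N)) '' (nub α : Set G) := by
  set q := QuotientGroup.mk' N
  have hq : Continuous q := continuous_quot_mk
  have hsemi : Function.Semiconj q α β := fun x => (hcomm x).symm
  change (nub β : Set (G ⧸ N)) = q '' nub α
  refine subset_antisymm ?_ (by
    rw [← Subgroup.coe_map]; exact map_nub_le_nub (QuotientGroup.mk'_surjective N) hq hsemi)
  have : IsClosed (N : Set G) := hNcl -- makes `G ⧸ N` Hausdorff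
  rw [coe_nub_eq_iInter_stableOpenSubgroup hαc hαc', image_iInter_of_directed hq
    (StableOpenSubgroup.directed α) fun V => V.1.isClosed_of_isOpen V.2.1]
  refine Set.subset_iInter fun V => ?_
  have hVc : IsCompact (q '' V.1) := (V.1.isClosed_of_isOpen V.2.1).isCompact.image hq
  have hVs : β '' (q '' V.1) = q '' V.1 := by rw [← hsemi.set_image, V.2.2]
  rw [← Subgroup.coe_map] at hVc hVs ⊢
  exact nub_le hVc (QuotientGroup.isOpenMap_coe _ V.2.1) (tidy_of_image_eq hVc.isClosed hVs)

/-- For a compact `G` and closed normal `α`-stable `N`, the nub of the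
induced automorphism of `G ⧸ N` is the image of `nub α`. -/
theorem nub_quotient_eq_image
    [Group G] [TopologicalSpace G] [IsTopologicalGroup G] [T2Space G]
    [TotallyDisconnectedSpace G] [CompactSpace G]
    (α : MulAut G) (hαc : Continuous ⇑α) (hαc' : Continuous ⇑(α⁻¹))
    (N : Subgroup G) [N.Normal] (hNcl : IsClosed (N : Set G))
    (hNs : ⇑α '' (N : Set G) = (N : Set G))
    (β : MulAut (G ⧸ N)) (hβc : Continuous ⇑β) (hβc' : Continuous ⇑(β⁻¹))
    (hcomm : ∀ x : G, β ((x : G ⧸ N)) = ((α x : G) : G ⧸ N)) :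
    (nub β : Set (G ⧸ N)) = (fun x : G => (x : G ⧸ N)) '' (nub α : Set G) :=
  nub_quotient_eq_image_general α hαc hαc' N hNcl β hcomm
end

section
/- Let G be a compact, Hausdorff, totally disconnected topological group and α a topological group automorphism of G. Then the sets con(α) = { x ∈ G : α^n(x) → 1 as n → +∞ } and bcg(α) = con(α) ∩ con(α⁻¹) are normal subgroups of G, and nub(α) is a normal subgroup of G. -/
open Pointwise Filter Topology

variable {G : Type*}

/-!
In a compact group conjugation is equicontinuous at `1` (tube lemma), so
`αⁿ(g x g⁻¹) = αⁿ(g) αⁿ(x) αⁿ(g)⁻¹ → 1` whenever `αⁿ(x) → 1`; this makes `con(α)` and hence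
`bcg(α)` normal.

For the nub, a tidy subgroup `V` of a compact group is `α`-stable: `V₊ ⊆ α(V₊)`, and tidiness
below makes `V₊₊ = ⋃ αᵏ(V₊)` a compact group exhausted by the increasing closed subgroups
`αᵏ(V₊)`. By Baire one of them is open in `V₊₊`, so by compactness the chain is eventually
constant, which forces `α(V₊) = V₊`. Likewise `α⁻¹(V₋) = V₋`, and `V = V₊V₋`. The normal core
of an `α`-stable open subgroup is again `α`-stable, closed and open, hence tidy; so `nub(α)` lies
in the normal core of every tidy `V`.
-/

open Set MulAction

section CompactGroup

variable {K : Type*} [Group K] [TopologicalSpace K] [IsTopologicalGroup K] [CompactSpace K]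

theorem Filter.Tendsto.conj_of_compactSpace {ι : Type*} {l : Filter ι} {a : ι → K} (b : ι → K)
    (ha : Tendsto a l (𝓝 1)) : Tendsto (fun i => b i * a i * (b i)⁻¹) l (𝓝 1) := by
  intro U hU
  have hconj : ∀ᶠ x in 𝓝 (1 : K), ∀ g ∈ univ, g * x * g⁻¹ ∈ U :=
    isCompact_univ.eventually_forall_of_forall_eventually fun g _ => by
      have hc : Tendsto (fun z : K × K => z.2 * z.1 * z.2⁻¹) (𝓝 (1, g)) (𝓝 1) := by
        simpa using (by fun_prop : Continuous fun z : K × K => z.2 * z.1 * z.2⁻¹).tendsto (1, g)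
      exact hc hU
  exact (ha.eventually hconj).mono fun i hi => hi (b i) (mem_univ _)

theorem Subgroup.exists_eq_top_of_monotone_of_iUnion_eq_univ {Q : ℕ → Subgroup K}
    (hQ : Monotone Q) (hclosed : ∀ n, IsClosed (Q n : Set K))
    (hcover : ⋃ n, (Q n : Set K) = univ) : ∃ n, Q n = ⊤ := by
  obtain ⟨k, x, hx⟩ := nonempty_interior_of_iUnion_of_closed hclosed hcover
  have hopen : IsOpen (Q k : Set K) := (Q k).isOpen_of_mem_nhds (mem_interior_iff_mem_nhds.mp hx)
  obtain ⟨n, hn⟩ := isCompact_univ.elim_directed_cover (fun n => (Q (k + n) : Set K))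
    (fun n => Subgroup.isOpen_mono (hQ (Nat.le_add_right k n)) hopen)
    (fun y _ => by
      obtain ⟨n, hn⟩ := mem_iUnion.mp (hcover.symm ▸ mem_univ y : y ∈ ⋃ n, (Q n : Set K))
      exact mem_iUnion.mpr ⟨n, hQ (Nat.le_add_left n k) hn⟩)
    (hQ.comp fun _ _ h => Nat.add_le_add_left h k).directed_le
  exact ⟨k + n, eq_top_iff.mpr fun y _ => hn (mem_univ y)⟩

theorem Subgroup.isOpen_normalCore {V : Subgroup K} (hV : IsOpen (V : Set K)) :
    IsOpen (V.normalCore : Set K) := by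
  have : Finite (K ⧸ V) := V.quotient_finite_of_isOpen hV
  have : V.FiniteIndex := V.finiteIndex_of_finite_quotient
  exact V.normalCore.isOpen_of_isClosed_of_finiteIndex
    (V.normalCore_isClosed (V.isClosed_of_isOpen hV))

end CompactGroup

section Contraction

variable [Group G] [TopologicalSpace G] [IsTopologicalGroup G]

def conSubgroup (α : MulAut G) : Subgroup G where
  carrier := conSet α
  one_mem' := by simpa [conSet] using tendsto_const_nhds
  mul_mem' hx hy := by simpa [conSet] using hx.mul hy
  inv_mem' hx := by simpa [conSet] using hx.inv

instance conSubgroup_normal [CompactSpace G] (α : MulAut G) : (conSubgroup α).Normal :=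
  ⟨fun x hx g => by
    simpa [conSubgroup, conSet] using Tendsto.conj_of_compactSpace (fun n => (α ^ n) g) hx⟩

end Contraction

namespace MulAut

variable [Group G] [TopologicalSpace G]

theorem continuous_pow_s8 {α : MulAut G} (hα : Continuous ⇑α) (n : ℕ) : Continuous ⇑(α ^ n) := by
  induction n with
  | zero => exact continuous_id
  | succ n ih => rw [pow_succ, coe_mul]; exact ih.comp hα

theorem isClosed_image_pow {α : MulAut G} (hα : Continuous ⇑α⁻¹) {S : Set G} (hS : IsClosed S)
    (n : ℕ) : IsClosed (⇑(α ^ n) '' S) := by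
  have h : ⇑(α ^ n) '' S = ⇑(α⁻¹ ^ n) ⁻¹' S := by
    rw [inv_pow]; exact (α ^ n).toEquiv.image_eq_preimage_symm S
  exact h ▸ hS.preimage (continuous_pow_s8 hα n)

theorem image_eq_of_subset_image_of_isClosed_iUnion [IsTopologicalGroup G] [CompactSpace G]
    {β : MulAut G} (hβ : Continuous ⇑β⁻¹) {P : Subgroup G} (hP : IsClosed (P : Set G))
    (hsub : (P : Set G) ⊆ ⇑β '' P) (hclosed : IsClosed (⋃ n : ℕ, ⇑(β ^ n) '' (P : Set G))) :
    ⇑β '' (P : Set G) = P := by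
  have hmono : Monotone fun n => mapAut (β ^ n) P := monotone_nat_of_le_succ fun n => by
    show ⇑(β ^ n) '' (P : Set G) ⊆ ⇑(β ^ (n + 1)) '' P
    rw [pow_succ, coe_mul, image_comp]
    exact image_mono hsub
  set H := ⨆ n, mapAut (β ^ n) P
  have hH : (H : Set G) = ⋃ n, ⇑(β ^ n) '' (P : Set G) :=
    Subgroup.coe_iSup_of_directed hmono.directed_le
  have : CompactSpace H := isCompact_iff_compactSpace.mp (hH ▸ hclosed).isCompact
  obtain ⟨n, hn⟩ := Subgroup.exists_eq_top_of_monotone_of_iUnion_eq_univ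
    (Q := fun n => (mapAut (β ^ n) P).subgroupOf H)
    (fun _ _ h => Subgroup.subgroupOf_mono H (hmono h))
    (fun n => (isClosed_image_pow hβ hP n).preimage continuous_subtype_val)
    (eq_univ_of_forall fun x => by
      have hx : (x : G) ∈ (H : Set G) := x.2
      rw [hH] at hx
      obtain ⟨n, hn⟩ := mem_iUnion.mp hx
      exact mem_iUnion.mpr ⟨n, hn⟩)
  have hle : mapAut (β ^ (n + 1)) P ≤ mapAut (β ^ n) P :=
    (le_iSup (fun n => mapAut (β ^ n) P) (n + 1)).trans (Subgroup.subgroupOf_eq_top.mp hn)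
  have himage : ⇑(β ^ n) '' (⇑β '' P) ⊆ ⇑(β ^ n) '' P := by
    rw [← image_comp, ← coe_mul, ← pow_succ]
    exact hle
  exact ((image_subset_image_iff (β ^ n).injective).mp himage).antisymm hsub

end MulAut

section Tidy

theorem plusPart_subset_image [Group G] (α : MulAut G) (V : Set G) :
    plusPart α V ⊆ ⇑α '' plusPart α V := by
  rw [plusPart, image_iInter α.bijective]
  refine subset_iInter fun k => (iInter_subset _ (k + 1)).trans ?_
  rw [← image_comp, ← MulAut.coe_mul, ← pow_succ']

theorem coe_plusSub [Group G] (α : MulAut G) (V : Subgroup G) :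
    (plusSub α V : Set G) = plusPart α V := by
  rw [plusSub, Subgroup.coe_iInf]
  rfl

theorem stabilizer_le_stabilizer_normalCore [Group G] (V : Subgroup G) :
    stabilizer (MulAut G) (V : Set G) ≤ stabilizer (MulAut G) (V.normalCore : Set G) := by
  have hmaps : ∀ σ ∈ stabilizer (MulAut G) (V : Set G),
      σ • (V.normalCore : Set G) ⊆ V.normalCore := by
    rintro σ hσ _ ⟨x, hx, rfl⟩ b
    have : σ (σ⁻¹ b * x * (σ⁻¹ b)⁻¹) ∈ σ • (V : Set G) := smul_mem_smul_set (hx (σ⁻¹ b))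
    simpa [mem_stabilizer_iff.mp hσ] using this
  exact fun σ hσ => (hmaps σ hσ).antisymm (subset_smul_set_iff.mpr (hmaps σ⁻¹ (inv_mem hσ)))

theorem tidy_of_mem_stabilizer [Group G] [TopologicalSpace G] {α : MulAut G} {V : Subgroup G}
    (hV : IsClosed (V : Set G)) (hα : α ∈ stabilizer (MulAut G) (V : Set G)) :
    Tidy α (V : Set G) := by
  have hpow : ∀ β ∈ stabilizer (MulAut G) (V : Set G), ∀ n : ℕ, ⇑(β ^ n) '' (V : Set G) = V :=
    fun β hβ n => pow_mem hβ n
  have hplus : plusPart α V = V := by simp only [plusPart, hpow α hα, iInter_const]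
  have hminus : minusPart α V = V := by
    simp only [minusPart, hpow α⁻¹ (inv_mem hα), iInter_const]
  refine ⟨?_, ?_, ?_⟩
  · rw [TidyAbove, hplus, hminus, coe_mul_coe]
  · simpa only [hplus, hpow α hα, iUnion_const] using hV
  · simpa only [hminus, hpow α⁻¹ (inv_mem hα), iUnion_const] using hV

variable [Group G] [TopologicalSpace G] [IsTopologicalGroup G] [CompactSpace G]

theorem mem_stabilizer_plusPart {α : MulAut G} (hα : Continuous ⇑α⁻¹) {V : Subgroup G}
    (hV : IsClosed (V : Set G)) (hclosed : IsClosed (⋃ k : ℕ, ⇑(α ^ k) '' plusPart α V)) :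
    α ∈ stabilizer (MulAut G) (plusPart α V) := by
  have hP : IsClosed (plusPart α V) := isClosed_iInter (MulAut.isClosed_image_pow hα hV)
  have := MulAut.image_eq_of_subset_image_of_isClosed_iUnion (P := plusSub α V) hα
    (by rwa [coe_plusSub]) (by rw [coe_plusSub]; exact plusPart_subset_image α V)
    (by rwa [coe_plusSub])
  rwa [coe_plusSub] at this

theorem mem_stabilizer_of_tidy {α : MulAut G} (hα : Continuous ⇑α) (hα' : Continuous ⇑α⁻¹)
    {V : Subgroup G} (hV : IsClosed (V : Set G)) (ht : Tidy α (V : Set G)) :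
    α ∈ stabilizer (MulAut G) (V : Set G) := by
  have hplus := mem_stabilizer_plusPart hα' hV ht.2.1
  have hminus : α⁻¹⁻¹ ∈ stabilizer (MulAut G) (minusPart α V) :=
    inv_mem (mem_stabilizer_plusPart (by rwa [inv_inv]) hV ht.2.2)
  rw [inv_inv] at hminus
  calc α • (V : Set G) = ⇑α '' (plusPart α V * minusPart α V) := by rw [← ht.1]; rfl
    _ = α • plusPart α V * α • minusPart α V := image_mul α
    _ = V := by rw [mem_stabilizer_iff.mp hplus, mem_stabilizer_iff.mp hminus, ← ht.1]

theorem tidy_normalCore {α : MulAut G} (hα : Continuous ⇑α) (hα' : Continuous ⇑α⁻¹)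
    {V : Subgroup G} (hV : IsOpen (V : Set G)) (ht : Tidy α (V : Set G)) :
    IsCompact (V.normalCore : Set G) ∧ IsOpen (V.normalCore : Set G) ∧
      Tidy α (V.normalCore : Set G) := by
  have hVcl := V.isClosed_of_isOpen hV
  have hcl : IsClosed (V.normalCore : Set G) := V.normalCore_isClosed hVcl
  exact ⟨hcl.isCompact, V.isOpen_normalCore hV, tidy_of_mem_stabilizer hcl
    (stabilizer_le_stabilizer_normalCore V (mem_stabilizer_of_tidy hα hα' hVcl ht))⟩

theorem nub_normal {α : MulAut G} (hα : Continuous ⇑α) (hα' : Continuous ⇑α⁻¹) :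
    (nub α).Normal := by
  refine ⟨fun x hx g => ?_⟩
  simp only [nub, Subgroup.mem_iInf, mem_ofPred_eq] at hx ⊢
  rintro V ⟨-, hVo, ht⟩
  exact V.normalCore_le (V.normalCore_normal.conj_mem x (hx _ (tidy_normalCore hα hα' hVo ht)) g)

end Tidy

theorem con_bcg_nub_normal_general
    [Group G] [TopologicalSpace G] [IsTopologicalGroup G] [CompactSpace G]
    (α : MulAut G) (hαc : Continuous ⇑α) (hαc' : Continuous ⇑(α⁻¹)) :
    (∃ C : Subgroup G, (C : Set G) = conSet α ∧ C.Normal) ∧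
    (∃ B : Subgroup G, (B : Set G) = bcgSet α ∧ B.Normal) ∧
    (nub α).Normal :=
  ⟨⟨conSubgroup α, rfl, inferInstance⟩, ⟨conSubgroup α ⊓ conSubgroup α⁻¹, rfl, inferInstance⟩,
    nub_normal hαc hαc'⟩

/-- For compact `G`, `con α`, `bcg α` and `nub α` are normal subgroups. -/
theorem con_bcg_nub_normal
    [Group G] [TopologicalSpace G] [IsTopologicalGroup G] [T2Space G]
    [TotallyDisconnectedSpace G] [CompactSpace G]
    (α : MulAut G) (hαc : Continuous ⇑α) (hαc' : Continuous ⇑(α⁻¹)) :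
    (∃ C : Subgroup G, (C : Set G) = conSet α ∧ C.Normal) ∧
    (∃ B : Subgroup G, (B : Set G) = bcgSet α ∧ B.Normal) ∧
    (nub α).Normal :=
  con_bcg_nub_normal_general α hαc hαc'
end

section
/- Let G be a compact, Hausdorff, totally disconnected topological group and α a topological group automorphism of G such that the pair (G,α) has finite depth, i.e. there is an open subgroup V of G with ⋂_{k∈ℤ} α^k(V) = {1}. Then nub(α) is an open subgroup of G. -/
open Pointwise Filter Topology

variable {G : Type*}

/-!
Choose an open subgroup `V` with `⋂ₖ αᵏ(V) = 1` and write `C n = ⋂_{-n ≤ i < 0} αⁱ(V)`, an open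
subgroup. The finite indices `[C n : C n ∩ V]` decrease, so they are eventually constant, from
`n = r` on say; a coset count then shows that every `x ∈ C r` factors, for each `k`, as `y z` with
`αⁱ y ∈ V` for `-(r + k) ≤ i < 0` and `αⁱ z ∈ V` for `0 ≤ i < k`.

A tidy subgroup `W` of a compact group is `α`-stable: the subgroups `αᵏ(W₊)` increase and have closed
union, so by Baire's theorem one of them is open in the union and the increasing chain stops, which
forces `α(W₊) = W₊`; likewise `α(W₋) = W₋`, and `W = W₊W₋`. By compactness and finite depth,
`W ⊇ ⋂_{|i| ≤ m} αⁱ(V)` for some `m`, so by stability `W` contains both factors `y`, `z` above once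
`k > 2m`. Hence `C r ≤ nub α`.
-/

section OrbitIn

variable [Group G]

/-- `V₊ = orbitIn α V (Iic 0)` and `V₋ = orbitIn α V (Ici 0)`; `V` witnesses finite depth iff
`orbitIn α V univ = ⊥`. -/
def orbitIn (α : MulAut G) (V : Subgroup G) (S : Set ℤ) : Subgroup G :=
  ⨅ n ∈ S, V.comap (α ^ n).toMonoidHom

variable {α : MulAut G} {V : Subgroup G} {S T : Set ℤ} {x : G}

@[simp]
theorem mem_orbitIn : x ∈ orbitIn α V S ↔ ∀ n ∈ S, (α ^ n) x ∈ V := by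
  simp [orbitIn]

theorem coe_orbitIn (S : Set ℤ) :
    (orbitIn α V S : Set G) = ⋂ n ∈ S, ⇑(α ^ n) ⁻¹' (V : Set G) := by
  ext; simp

theorem orbitIn_antitone : Antitone (orbitIn α V) :=
  fun _ _ hST _ hx => mem_orbitIn.mpr fun n hn => mem_orbitIn.mp hx n (hST hn)

theorem zpow_apply_mem_orbitIn {m : ℤ} (hTS : ∀ n ∈ T, n + m ∈ S) (hx : x ∈ orbitIn α V S) :
    (α ^ m) x ∈ orbitIn α V T :=
  mem_orbitIn.mpr fun n hn => by
    rw [← MulAut.mul_apply, ← zpow_add]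
    exact mem_orbitIn.mp hx _ (hTS n hn)

theorem mem_image_zpow {s : Set G} {m : ℤ} : x ∈ ⇑(α ^ m) '' s ↔ (α ^ (-m)) x ∈ s := by
  rw [zpow_neg]
  exact Set.mem_image_equiv (f := (α ^ m).toEquiv)

theorem image_zpow_orbitIn (m : ℤ) :
    ⇑(α ^ m) '' (orbitIn α V S : Set G) = orbitIn α V ((· + m) ⁻¹' S) := by
  ext y
  simp only [mem_image_zpow, SetLike.mem_coe, mem_orbitIn, Set.mem_preimage, ← MulAut.mul_apply,
    ← zpow_add]
  refine ⟨fun h n hn => by simpa using h _ hn, fun h n hn => h _ (by simpa using hn)⟩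

theorem plusPart_eq_orbitIn : plusPart α (V : Set G) = orbitIn α V (Set.Iic 0) := by
  ext y
  simp only [plusPart, Set.mem_iInter, ← zpow_natCast, mem_image_zpow, SetLike.mem_coe, mem_orbitIn,
    Set.mem_Iic]
  refine ⟨fun h n hn => ?_, fun h k => h _ (by omega)⟩
  simpa [Int.toNat_of_nonneg (neg_nonneg.mpr hn)] using h (-n).toNat

theorem image_pow_plusPart (k : ℕ) :
    ⇑(α ^ k) '' plusPart α (V : Set G) = orbitIn α V (Set.Iic (-k)) := by
  rw [plusPart_eq_orbitIn, ← zpow_natCast, image_zpow_orbitIn, Set.preimage_add_const_Iic,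
    zero_sub]

theorem iInter_image_zpow_eq_orbitIn_univ :
    ⋂ k : ℤ, ⇑(α ^ k) '' (V : Set G) = orbitIn α V Set.univ := by
  ext y
  simp only [Set.mem_iInter, mem_image_zpow, SetLike.mem_coe, mem_orbitIn, Set.mem_univ,
    forall_const]
  exact ((neg_surjective (G := ℤ)).forall (p := fun n => (α ^ n) y ∈ V)).symm

theorem zpow_apply_mem_iff_of_smul_eq {W : Subgroup G} (hW : α • W = W) (k : ℤ) :
    (α ^ k) x ∈ W ↔ x ∈ W := by
  have hk : (α ^ k) • W = W := MulAction.mem_stabilizer_iff.mp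
    ((MulAction.stabilizer (MulAut G) W).zpow_mem (MulAction.mem_stabilizer_iff.mpr hW) k)
  conv_rhs => rw [← Subgroup.smul_mem_pointwise_smul_iff (a := α ^ k), hk]
  rfl

theorem orbitIn_le_of_smul_eq {W : Subgroup G} (hW : α • W = W)
    (hT : orbitIn α V T ≤ W) (c : ℤ) (hTS : ∀ n ∈ T, n + c ∈ S) : orbitIn α V S ≤ W :=
  fun _ hx => (zpow_apply_mem_iff_of_smul_eq hW c).mp (hT (zpow_apply_mem_orbitIn hTS hx))

end OrbitIn

section Topology

variable [Group G] [TopologicalSpace G] {α : MulAut G} {V : Subgroup G}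

theorem continuous_zpow_apply (hα : Continuous α) (hα' : Continuous ⇑α⁻¹) (n : ℤ) :
    Continuous ⇑(α ^ n) := by
  induction n using Int.induction_on with
  | zero => exact continuous_id
  | succ n ih => rw [zpow_add_one, MulAut.coe_mul]; exact ih.comp hα
  | pred n ih => rw [zpow_sub_one, MulAut.coe_mul]; exact ih.comp hα'

theorem isClosed_orbitIn (hα : Continuous α) (hα' : Continuous ⇑α⁻¹) (hV : IsClosed (V : Set G))
    (S : Set ℤ) : IsClosed (orbitIn α V S : Set G) := by
  rw [coe_orbitIn]
  exact isClosed_biInter fun n _ => hV.preimage (continuous_zpow_apply hα hα' n)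

theorem isOpen_orbitIn (hα : Continuous α) (hα' : Continuous ⇑α⁻¹) (hV : IsOpen (V : Set G))
    {S : Set ℤ} (hS : S.Finite) : IsOpen (orbitIn α V S : Set G) := by
  rw [coe_orbitIn]
  exact hS.isOpen_biInter fun n _ => hV.preimage (continuous_zpow_apply hα hα' n)

theorem exists_orbitIn_Icc_subset [CompactSpace G] (hα : Continuous α) (hα' : Continuous ⇑α⁻¹)
    (hV : IsClosed (V : Set G)) (hdepth : (orbitIn α V Set.univ : Set G) = {1}) {U : Set G}
    (hU : U ∈ 𝓝 1) : ∃ m : ℕ, (orbitIn α V (Set.Icc (-m) m) : Set G) ⊆ U := by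
  refine exists_subset_nhds_of_compactSpace ?_ (fun m => isClosed_orbitIn hα hα' hV _) ?_
  · exact Antitone.directed_ge fun a b hab => orbitIn_antitone (Set.Icc_subset_Icc (by omega)
      (by omega))
  · intro x hx
    suffices x ∈ (orbitIn α V Set.univ : Set G) by
      rw [hdepth, Set.mem_singleton_iff] at this
      rwa [this]
    refine mem_orbitIn.mpr fun n _ => ?_
    exact mem_orbitIn.mp (Set.mem_iInter.mp hx n.natAbs) n ⟨by omega, by omega⟩

end Topology

section Stability

variable [Group G] [TopologicalSpace G] [IsTopologicalGroup G] [CompactSpace G]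

theorem Subgroup.exists_eq_top_of_iUnion_eq_univ {Q : ℕ → Subgroup G} (hQ : Monotone Q)
    (hQc : ∀ k, IsClosed (Q k : Set G)) (hcover : ⋃ k, (Q k : Set G) = Set.univ) :
    ∃ K, Q K = ⊤ := by
  obtain ⟨k₀, x, hx⟩ := nonempty_interior_of_iUnion_of_closed hQc hcover
  have hopen : ∀ k, IsOpen (Q (k₀ + k) : Set G) := fun k =>
    Subgroup.isOpen_mono (hQ (Nat.le_add_right k₀ k))
      ((Q k₀).isOpen_of_mem_nhds (mem_interior_iff_mem_nhds.mp hx))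
  have hcover' : Set.univ ⊆ ⋃ k, (Q (k₀ + k) : Set G) := by
    intro y _
    obtain ⟨k, hk⟩ := Set.mem_iUnion.mp (hcover ▸ Set.mem_univ y)
    exact Set.mem_iUnion.mpr ⟨k, hQ (Nat.le_add_left k k₀) hk⟩
  obtain ⟨K, hK⟩ := isCompact_univ.elim_directed_cover _ hopen hcover'
    (Monotone.directed_le fun a b hab => hQ (Nat.add_le_add_left hab k₀))
  exact ⟨k₀ + K, eq_top_iff.mpr fun y _ => hK (Set.mem_univ y)⟩

theorem Subgroup.exists_forall_le_of_isClosed_iUnion {Q : ℕ → Subgroup G} (hQ : Monotone Q)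
    (hQc : ∀ k, IsClosed (Q k : Set G)) (hU : IsClosed (⋃ k, (Q k : Set G))) :
    ∃ K, ∀ k, Q k ≤ Q K := by
  set U := ⨆ k, Q k
  have hUcoe : (U : Set G) = ⋃ k, (Q k : Set G) := Subgroup.coe_iSup_of_directed hQ.directed_le
  have : CompactSpace U := isCompact_iff_compactSpace.mp (hUcoe ▸ hU).isCompact
  obtain ⟨K, hK⟩ := Subgroup.exists_eq_top_of_iUnion_eq_univ (Q := fun k => (Q k).subgroupOf U)
    (fun a b hab => Subgroup.comap_mono (hQ hab))
    (fun k => (hQc k).preimage continuous_subtype_val)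
    (Set.eq_univ_of_forall fun u => by
      obtain ⟨k, hk⟩ := Set.mem_iUnion.mp (hUcoe ▸ u.2 : (u : G) ∈ ⋃ k, (Q k : Set G))
      exact Set.mem_iUnion.mpr ⟨k, hk⟩)
  exact ⟨K, fun k => (le_iSup Q k).trans (Subgroup.subgroupOf_eq_top.mp hK)⟩

variable {α : MulAut G}

theorem image_plusPart_eq (hα : Continuous α) (hα' : Continuous ⇑α⁻¹) {W : Subgroup G}
    (hW : IsClosed (W : Set G)) (hcl : IsClosed (⋃ k : ℕ, ⇑(α ^ k) '' plusPart α (W : Set G))) :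
    ⇑α '' plusPart α (W : Set G) = plusPart α (W : Set G) := by
  set Q : ℕ → Subgroup G := fun k => orbitIn α W (Set.Iic (-k))
  obtain ⟨K, hK⟩ := Subgroup.exists_forall_le_of_isClosed_iUnion (Q := Q)
    (fun a b hab => orbitIn_antitone (Set.Iic_subset_Iic.mpr (by omega)))
    (fun k => isClosed_orbitIn hα hα' hW _) (by simpa only [image_pow_plusPart] using hcl)
  -- `Q (K + 1) ≤ Q K`, translated back by `αᴷ`
  have hshift : orbitIn α W (Set.Iic (-1)) ≤ orbitIn α W (Set.Iic 0) := fun x hx => by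
    have := hK (K + 1) (zpow_apply_mem_orbitIn (m := K) (fun n hn => by
      simp only [Set.mem_Iic] at hn ⊢; omega) hx)
    simpa [← MulAut.mul_apply, ← zpow_add] using
      zpow_apply_mem_orbitIn (m := -K) (T := Set.Iic 0) (fun n hn => by
        simp only [Set.mem_Iic] at hn ⊢; omega) this
  have h := image_pow_plusPart (α := α) (V := W) 1
  rw [pow_one, Nat.cast_one] at h
  rw [h, plusPart_eq_orbitIn]
  exact congrArg _ (le_antisymm hshift (orbitIn_antitone (Set.Iic_subset_Iic.mpr (by omega))))

theorem smul_eq_self_of_tidy (hα : Continuous α) (hα' : Continuous ⇑α⁻¹) {W : Subgroup G}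
    (hW : IsClosed (W : Set G)) (htidy : Tidy α (W : Set G)) : α • W = W := by
  obtain ⟨habove, hplus, hminus⟩ := htidy
  have hP := image_plusPart_eq hα hα' hW hplus
  have hM : ⇑α '' minusPart α (W : Set G) = minusPart α (W : Set G) := by
    have : ⇑α⁻¹ '' minusPart α (W : Set G) = minusPart α (W : Set G) :=
      image_plusPart_eq (α := α⁻¹) hα' (by rwa [inv_inv]) hW hminus
    conv_lhs => rw [← this, Set.image_image]
    simp
  refine SetLike.coe_injective ?_
  rw [Subgroup.coe_pointwise_smul, ← Set.image_smul]
  simp only [MulAut.smul_def]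
  rw [habove, Set.image_mul, hP, hM, ← habove]

end Stability

section Index

variable [Group G]

theorem Subgroup.subset_mul_inf_of_relIndex_eq {H K L : Subgroup G} (hHK : H ≤ K)
    (hK : L.relIndex K ≠ 0) (h : L.relIndex H = L.relIndex K) :
    (K : Set G) ⊆ H * (L ⊓ K : Subgroup G) := by
  intro x hx
  have : Finite (K ⧸ L.subgroupOf K) := Nat.finite_of_card_ne_zero hK
  have hbij : Function.Bijective (Subgroup.quotientSubgroupOfEmbeddingOfLE L hHK) :=
    (Nat.bijective_iff_injective_and_card _).mpr ⟨Function.Embedding.injective _, h⟩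
  obtain ⟨q, hq⟩ := hbij.2 (QuotientGroup.mk ⟨x, hx⟩)
  obtain ⟨y, rfl⟩ := QuotientGroup.mk_surjective q
  rw [Subgroup.quotientSubgroupOfEmbeddingOfLE_apply_mk, QuotientGroup.eq,
    Subgroup.mem_subgroupOf] at hq
  exact ⟨y, y.2, (y : G)⁻¹ * x, ⟨by simpa using hq, K.mul_mem (K.inv_mem (hHK y.2)) hx⟩,
    mul_inv_cancel_left _ _⟩

variable (α : MulAut G) (V : Subgroup G) [V.FiniteIndex]

theorem exists_orbitIn_Ico_subset_mul_of_le :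
    ∃ r : ℕ, ∀ n m : ℕ, r ≤ n → n ≤ m → (orbitIn α V (Set.Ico (-n) 0) : Set G) ⊆
      orbitIn α V (Set.Ico (-m) 0) * orbitIn α V (Set.Ico (-n) 1) := by
  set C : ℕ → Subgroup G := fun n => orbitIn α V (Set.Ico (-n) 0)
  have hC : Antitone C := fun a b hab => orbitIn_antitone (Set.Ico_subset_Ico (by omega) le_rfl)
  have hfin (K : Subgroup G) : V.relIndex K ≠ 0 := Subgroup.FiniteIndex.index_ne_zero
  set e : ℕ → ℕ := fun n => V.relIndex (C n)
  have he : Antitone e := fun a b hab => Subgroup.relIndex_le_of_le_right (hC hab) (hfin _)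
  set r := Function.argmin e
  refine ⟨r, fun n m hrn hnm x hx => ?_⟩
  have heq : e m = e n := le_antisymm (he hnm) ((he hrn).trans (Function.argmin_le e m))
  obtain ⟨y, hy, z, ⟨hzV, hzC⟩, rfl⟩ :=
    Set.mem_mul.mp (Subgroup.subset_mul_inf_of_relIndex_eq (hC hnm) (hfin _) heq hx)
  refine Set.mem_mul.mpr ⟨y, hy, z, mem_orbitIn.mpr fun k hk => ?_, rfl⟩
  by_cases hk0 : k = 0
  · simpa [hk0] using hzV
  · exact mem_orbitIn.mp hzC k ⟨hk.1, by have := hk.2; omega⟩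

theorem exists_orbitIn_Ico_subset_mul :
    ∃ r : ℕ, ∀ k : ℕ, (orbitIn α V (Set.Ico (-r) 0) : Set G) ⊆
      orbitIn α V (Set.Ico (-(r + k : ℕ)) 0) * orbitIn α V (Set.Ico 0 k) := by
  obtain ⟨r, hr⟩ := exists_orbitIn_Ico_subset_mul_of_le α V
  suffices key : ∀ k : ℕ, ∀ n m : ℕ, r ≤ n → n ≤ m → (orbitIn α V (Set.Ico (-n) 0) : Set G) ⊆
      orbitIn α V (Set.Ico (-m) 0) * orbitIn α V (Set.Ico (-n) k) by
    refine ⟨r, fun k x hx => ?_⟩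
    obtain ⟨y, hy, z, hz, rfl⟩ := Set.mem_mul.mp (key k r (r + k) le_rfl (by omega) hx)
    exact Set.mem_mul.mpr
      ⟨y, hy, z, orbitIn_antitone (Set.Ico_subset_Ico (by omega) le_rfl) hz, rfl⟩
  intro k
  induction k with
  | zero =>
    intro n m _ _ x hx
    exact Set.mem_mul.mpr ⟨1, one_mem _, x, hx, one_mul x⟩
  | succ k ih =>
    intro n m hrn hnm x hx
    obtain ⟨y, hy, v, hv, rfl⟩ := Set.mem_mul.mp (hr n m hrn hnm hx)
    have hαv : (α ^ (1 : ℤ)) v ∈ orbitIn α V (Set.Ico (-(n + 1 : ℕ)) 0) := by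
      refine zpow_apply_mem_orbitIn (fun i hi => ?_) hv
      simp only [Set.mem_Ico] at hi ⊢; push_cast at hi; omega
    -- factor `α v` one level down and pull both factors back by `α⁻¹`
    obtain ⟨y', hy', w, hw, hαv_eq⟩ :=
      Set.mem_mul.mp (ih (n + 1) (m + 1) (by omega) (by omega) hαv)
    have hv_eq : v = (α ^ (-1 : ℤ)) y' * (α ^ (-1 : ℤ)) w := by
      rw [← map_mul, hαv_eq, ← MulAut.mul_apply, ← zpow_add]
      simp
    refine Set.mem_mul.mpr ⟨y * (α ^ (-1 : ℤ)) y', mul_mem hy (zpow_apply_mem_orbitIn ?_ hy'),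
      (α ^ (-1 : ℤ)) w, zpow_apply_mem_orbitIn ?_ hw, by rw [hv_eq, mul_assoc]⟩
    · intro i hi; simp only [Set.mem_Ico] at hi ⊢; push_cast; omega
    · intro i hi; simp only [Set.mem_Ico] at hi ⊢; push_cast at hi ⊢; omega

end Index

theorem nub_isOpen_of_finiteDepth_general
    [Group G] [TopologicalSpace G] [IsTopologicalGroup G] [CompactSpace G]
    (α : MulAut G) (hαc : Continuous ⇑α) (hαc' : Continuous ⇑(α⁻¹))
    (hfd : ∃ V : Subgroup G, IsOpen (V : Set G) ∧
      (⋂ k : ℤ, ⇑(α ^ k) '' (V : Set G)) = ({1} : Set G)) :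
    IsOpen (nub α : Set G) := by
  obtain ⟨V, hVo, hdepth⟩ := hfd
  rw [iInter_image_zpow_eq_orbitIn_univ] at hdepth
  have : Finite (G ⧸ V) := V.quotient_finite_of_isOpen hVo
  have : V.FiniteIndex := Subgroup.finiteIndex_of_finite_quotient
  obtain ⟨r, hr⟩ := exists_orbitIn_Ico_subset_mul α V
  refine Subgroup.isOpen_mono ?_ (isOpen_orbitIn hαc hαc' hVo (Set.finite_Ico (-(r : ℤ)) 0))
  refine le_iInf₂ fun W ⟨_, hWo, hWt⟩ => ?_
  have hW := smul_eq_self_of_tidy hαc hαc' (W.isClosed_of_isOpen hWo) hWt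
  obtain ⟨m, hm⟩ := exists_orbitIn_Icc_subset hαc hαc' (V.isClosed_of_isOpen hVo) hdepth
    (hWo.mem_nhds W.one_mem)
  intro x hx
  obtain ⟨y, hy, z, hz, rfl⟩ := Set.mem_mul.mp (hr (2 * m + 1) hx)
  refine W.mul_mem (orbitIn_le_of_smul_eq hW hm (-(m + 1)) (fun n hn => ?_) hy)
    (orbitIn_le_of_smul_eq hW hm m (fun n hn => ?_) hz)
  all_goals simp only [Set.mem_Icc, Set.mem_Ico] at hn ⊢; push_cast; omega

/-- If the compact pair `(G, α)` has finite depth then `nub α` is open. -/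
theorem nub_isOpen_of_finiteDepth
    [Group G] [TopologicalSpace G] [IsTopologicalGroup G] [T2Space G]
    [TotallyDisconnectedSpace G] [CompactSpace G]
    (α : MulAut G) (hαc : Continuous ⇑α) (hαc' : Continuous ⇑(α⁻¹))
    (hfd : ∃ V : Subgroup G, IsOpen (V : Set G) ∧
      (⋂ k : ℤ, ⇑(α ^ k) '' (V : Set G)) = ({1} : Set G)) :
    IsOpen (nub α : Set G) :=
  nub_isOpen_of_finiteDepth_general α hαc hαc' hfd
end

section
/- Let G be a compact, Hausdorff, totally disconnected topological group and α a topological group automorphism of G. Suppose V is an open normal subgroup of G with ⋂_{k∈ℤ} α^k(V) = {1}. Then for every i, j ∈ ℤ the subgroup α^i(V₊) ∩ α^j(V₋) is a finite normal subgroup of G. -/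
open Pointwise Filter Topology

variable {G : Type*}

/-!
The subgroup `α^i(V₊) ∩ α^j(V₋)` is the intersection of the `α^m(V)` over all `m ∉ (j, i)`. It is
closed, hence compact, and it meets the open subgroup `⋂_{j < m < i} α^m(V)` only in
`⋂_{m ∈ ℤ} α^m(V) = 1`; a compact discrete set is finite. Normality holds because every `α^m(V)`
is normal.
-/

open Set

theorem iInf_add_natCast_eq_biInf_Ici {L : Type*} [CompleteLattice L] (f : ℤ → L) (i : ℤ) :
    ⨅ k : ℕ, f (i + k) = ⨅ m ∈ Ici i, f m :=
  le_antisymm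
    (le_iInf₂ fun m hm => (iInf_le _ (m - i).toNat).trans_eq <| by rw [mem_Ici] at hm; congr; omega)
    (le_iInf fun k => biInf_le _ (by simp))

theorem iInf_sub_natCast_eq_biInf_Iic {L : Type*} [CompleteLattice L] (f : ℤ → L) (j : ℤ) :
    ⨅ k : ℕ, f (j - k) = ⨅ m ∈ Iic j, f m :=
  le_antisymm
    (le_iInf₂ fun m hm => (iInf_le _ (j - m).toNat).trans_eq <| by rw [mem_Iic] at hm; congr; omega)
    (le_iInf fun k => biInf_le _ (by simp))

theorem Subgroup.finite_of_isCompact_of_inf_eq_bot [Group G] [TopologicalSpace G]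
    [IsTopologicalGroup G] {H K : Subgroup G} (hH : IsCompact (H : Set G))
    (hK : IsOpen (K : Set G)) (hHK : H ⊓ K = ⊥) : (H : Set G).Finite := by
  refine hH.finite (isDiscrete_iff_discreteTopology.2 ?_)
  refine discreteTopology_of_isOpen_singleton_one (G := H) ?_
  convert hK.preimage continuous_subtype_val
  ext ⟨x, hx⟩
  simpa using ⟨fun h => h ▸ K.one_mem, Subgroup.disjoint_def.1 (disjoint_iff.2 hHK) hx⟩

theorem MulAut.continuous_zpow [Group G] [TopologicalSpace G] {α : MulAut G}
    (hα : Continuous α) (hα' : Continuous ⇑α⁻¹) (m : ℤ) : Continuous ⇑(α ^ m) := by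
  induction m using Int.induction_on with
  | zero => exact continuous_id
  | succ k ih => rw [zpow_add_one, MulAut.coe_mul]; exact ih.comp hα
  | pred k ih => rw [zpow_sub_one, MulAut.coe_mul]; exact ih.comp hα'

section mapAut

variable [Group G]

@[simp]
theorem coe_mapAut (β : MulAut G) (V : Subgroup G) : (mapAut β V : Set G) = β '' V := rfl

theorem mapAut_mul (β γ : MulAut G) (V : Subgroup G) :
    mapAut (β * γ) V = mapAut β (mapAut γ V) :=
  SetLike.coe_injective (by simp [image_image])

theorem mapAut_iInf {ι : Sort*} (β : MulAut G) (H : ι → Subgroup G) :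
    mapAut β (⨅ i, H i) = ⨅ i, mapAut β (H i) :=
  SetLike.coe_injective (by simp [Subgroup.coe_iInf, image_iInter β.bijective])

instance mapAut_normal (β : MulAut G) (V : Subgroup G) [hV : V.Normal] : (mapAut β V).Normal :=
  ⟨by
    rintro _ ⟨v, hv, rfl⟩ g
    exact ⟨β⁻¹ g * v * (β⁻¹ g)⁻¹, hV.conj_mem v hv _, by simp⟩⟩

theorem coe_mapAut_eq_preimage (β : MulAut G) (V : Subgroup G) :
    (mapAut β V : Set G) = ⇑β⁻¹ ⁻¹' V :=
  β.toEquiv.image_eq_preimage_symm _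

end mapAut

def zpowImagesInf [Group G] (α : MulAut G) (V : Subgroup G) (S : Set ℤ) : Subgroup G :=
  ⨅ m ∈ S, mapAut (α ^ m) V

section zpowImagesInf

variable [Group G] (α : MulAut G) (V : Subgroup G)

theorem zpowImagesInf_union (S T : Set ℤ) :
    zpowImagesInf α V (S ∪ T) = zpowImagesInf α V S ⊓ zpowImagesInf α V T :=
  iInf_union

theorem zpowImagesInf_univ (hV : (⋂ k : ℤ, ⇑(α ^ k) '' (V : Set G)) = {1}) :
    zpowImagesInf α V univ = ⊥ :=
  SetLike.coe_injective (by simpa [zpowImagesInf, Subgroup.coe_iInf] using hV)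

instance zpowImagesInf_normal (S : Set ℤ) [V.Normal] : (zpowImagesInf α V S).Normal :=
  Subgroup.normal_iInf_normal fun _ => Subgroup.normal_iInf_normal fun _ => inferInstance

theorem mapAut_zpow_plusSub (i : ℤ) :
    mapAut (α ^ i) (plusSub α V) = zpowImagesInf α V (Ici i) := by
  have h (k : ℕ) : α ^ i * α ^ k = α ^ (i + k) := by rw [zpow_add, zpow_natCast]
  simp only [plusSub, mapAut_iInf, ← mapAut_mul, h]
  exact iInf_add_natCast_eq_biInf_Ici (fun m => mapAut (α ^ m) V) i

theorem mapAut_zpow_minusSub (j : ℤ) :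
    mapAut (α ^ j) (minusSub α V) = zpowImagesInf α V (Iic j) := by
  have h (k : ℕ) : α ^ j * α⁻¹ ^ k = α ^ (j - k) := by rw [zpow_sub, zpow_natCast, inv_pow]
  simp only [minusSub, mapAut_iInf, ← mapAut_mul, h]
  exact iInf_sub_natCast_eq_biInf_Iic (fun m => mapAut (α ^ m) V) j

variable [TopologicalSpace G] {α V}

theorem isClosed_zpowImagesInf (hα : ∀ m : ℤ, Continuous ⇑(α ^ m)) (hV : IsClosed (V : Set G))
    (S : Set ℤ) : IsClosed (zpowImagesInf α V S : Set G) := by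
  simp only [zpowImagesInf, Subgroup.coe_iInf, coe_mapAut_eq_preimage, ← zpow_neg]
  exact isClosed_biInter fun m _ => hV.preimage (hα _)

theorem isOpen_zpowImagesInf (hα : ∀ m : ℤ, Continuous ⇑(α ^ m)) (hV : IsOpen (V : Set G))
    {S : Set ℤ} (hS : S.Finite) : IsOpen (zpowImagesInf α V S : Set G) := by
  simp only [zpowImagesInf, Subgroup.coe_iInf, coe_mapAut_eq_preimage, ← zpow_neg]
  exact hS.isOpen_biInter fun m _ => hV.preimage (hα _)

end zpowImagesInf

theorem plus_inter_minus_finite_normal_general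
    [Group G] [TopologicalSpace G] [IsTopologicalGroup G] [CompactSpace G]
    (α : MulAut G) (hαc : Continuous ⇑α) (hαc' : Continuous ⇑(α⁻¹))
    (V : Subgroup G) [V.Normal] (hVo : IsOpen (V : Set G))
    (hV1 : (⋂ k : ℤ, ⇑(α ^ k) '' (V : Set G)) = ({1} : Set G)) :
    ∀ i j : ℤ,
      ((mapAut (α ^ i) (plusSub α V) ⊓ mapAut (α ^ j) (minusSub α V) : Subgroup G) :
        Set G).Finite ∧
      (mapAut (α ^ i) (plusSub α V) ⊓ mapAut (α ^ j) (minusSub α V)).Normal := by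
  intro i j
  have hα := MulAut.continuous_zpow hαc hαc'
  rw [mapAut_zpow_plusSub, mapAut_zpow_minusSub, ← zpowImagesInf_union]
  refine ⟨Subgroup.finite_of_isCompact_of_inf_eq_bot
    (isClosed_zpowImagesInf hα (V.isClosed_of_isOpen hVo) _).isCompact
    (isOpen_zpowImagesInf hα hVo (finite_Ioo j i)) ?_, inferInstance⟩
  have hcover : Ici i ∪ Iic j ∪ Ioo j i = univ := by
    ext m
    simp only [mem_union, mem_Ici, mem_Iic, mem_Ioo, mem_univ, iff_true]
    omega
  rw [← zpowImagesInf_union, hcover, zpowImagesInf_univ α V hV1]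

/-- If `V` is an open normal subgroup of the compact group `G` with
`⋂_{k ∈ ℤ} α^k(V) = 1`, then `α^i(V₊) ∩ α^j(V₋)` is a finite normal subgroup of `G`. -/
theorem plus_inter_minus_finite_normal
    [Group G] [TopologicalSpace G] [IsTopologicalGroup G] [T2Space G]
    [TotallyDisconnectedSpace G] [CompactSpace G]
    (α : MulAut G) (hαc : Continuous ⇑α) (hαc' : Continuous ⇑(α⁻¹))
    (V : Subgroup G) [V.Normal] (hVo : IsOpen (V : Set G))
    (hV1 : (⋂ k : ℤ, ⇑(α ^ k) '' (V : Set G)) = ({1} : Set G)) :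
    ∀ i j : ℤ,
      ((mapAut (α ^ i) (plusSub α V) ⊓ mapAut (α ^ j) (minusSub α V) : Subgroup G) :
        Set G).Finite ∧
      (mapAut (α ^ i) (plusSub α V) ⊓ mapAut (α ^ j) (minusSub α V)).Normal :=
  plus_inter_minus_finite_normal_general α hαc hαc' V hVo hV1
end
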